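/- arXiv:2504.07321 — 9 statements merged into one kernel-verified Lean document; each statement's English description precedes it below -/
import Mathlib

section
/- Let S_0, S_1, ..., S_n be exchangeable real-valued random variables, and define the conformal p-value p = (1 + #{i ∈ {1,...,n} : S_i ≥ S_0}) / (n + 1). Then for every t ∈ [0,1], P(p ≤ t) ≤ t. -/
open MeasureTheory Finset
open scoped ENNReal

/-- Exchangeability: the joint law is invariant under permutations of the indices. -/
def Exchangeable {Ω : Type*} [MeasurableSpace Ω] (μ : Measure Ω) {n : ℕ}
    (S : Fin n → Ω → ℝ) : Prop :=
  ∀ σ : Equiv.Perm (Fin n),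
    Measure.map (fun ω => fun i => S (σ i) ω) μ = Measure.map (fun ω => fun i => S i ω) μ

noncomputable def Ncount {n : ℕ} (x : Fin (n+1) → ℝ) (j : Fin (n+1)) : ℕ :=
  (univ.filter (fun i => x j ≤ x i)).card

lemma Ncount_card_le {n : ℕ} (x : Fin (n+1) → ℝ) (k : ℕ) :
    (univ.filter (fun j => Ncount x j ≤ k)).card ≤ k := by
  set A := univ.filter (fun j => Ncount x j ≤ k) with hA
  rcases A.eq_empty_or_nonempty with h | h
  · simp [h]
  · obtain ⟨j, hj, hmin⟩ := A.exists_min_image x h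
    have hsub : A ⊆ univ.filter (fun i => x j ≤ x i) := by
      intro a ha
      simp only [mem_filter, mem_univ, true_and]
      exact hmin a ha
    calc A.card ≤ Ncount x j := card_le_card hsub
    _ ≤ k := (mem_filter.mp hj).2

lemma measurable_Ncount {n : ℕ} (j : Fin (n+1)) :
    Measurable (fun x : Fin (n+1) → ℝ => Ncount x j) := by
  have h : (fun x : Fin (n+1) → ℝ => Ncount x j)
      = fun x => ∑ i, if x j ≤ x i then 1 else 0 := by
    funext x
    simp only [Ncount, Finset.card_filter]
  rw [h]
  exact Finset.measurable_sum _ fun i _ =>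
    Measurable.ite (measurableSet_le (measurable_pi_apply j) (measurable_pi_apply i))
      measurable_const measurable_const

lemma Ncount_comp {n : ℕ} (x : Fin (n+1) → ℝ) (σ : Equiv.Perm (Fin (n+1))) (j : Fin (n+1)) :
    Ncount (x ∘ σ) j = Ncount x (σ j) := by
  unfold Ncount
  apply Finset.card_bij (fun i _ => σ i)
  · intro a ha; simp only [mem_filter, mem_univ, true_and] at ha ⊢; exact ha
  · intro a _ b _ hab; exact σ.injective hab
  · intro b hb; refine ⟨σ.symm b, ?_, by simp⟩
    simp only [mem_filter, mem_univ, true_and] at hb ⊢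
    simpa using hb

lemma Ncount_zero {n : ℕ} (x : Fin (n+1) → ℝ) :
    Ncount x 0 = 1 + (univ.filter (fun i : Fin n => x i.succ ≥ x 0)).card := by
  unfold Ncount
  rw [Fin.univ_succ, filter_cons, if_pos le_rfl, card_cons, Finset.filter_map, card_map]
  simp only [Function.comp_def, ge_iff_le, Fin.succEmb, Function.Embedding.coeFn_mk]
  omega

/-- Super-uniformity of the conformal p-value under exchangeability. -/
theorem conformal_pvalue_superuniform
    {Ω : Type*} [MeasurableSpace Ω] (μ : Measure Ω) [IsProbabilityMeasure μ]
    {n : ℕ} (S : Fin (n + 1) → Ω → ℝ) (hmeas : ∀ i, Measurable (S i))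
    (hexch : Exchangeable μ S)
    (p : Ω → ℝ)
    (hp : ∀ ω, p ω =
      (1 + ((Finset.univ.filter (fun i : Fin n => S i.succ ω ≥ S 0 ω)).card : ℝ)) / (n + 1))
    (t : ℝ) (ht : t ∈ Set.Icc (0 : ℝ) 1) :
    μ {ω | p ω ≤ t} ≤ ENNReal.ofReal t := by
  obtain ⟨ht0, ht1⟩ := ht
  set k := ⌊t * ((n : ℝ) + 1)⌋₊ with hk
  set X : Ω → Fin (n+1) → ℝ := fun ω i => S i ω with hX
  have hXmeas : Measurable X := measurable_pi_lambda _ hmeas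
  have hB : ∀ j : Fin (n+1), MeasurableSet {x : Fin (n+1) → ℝ | Ncount x j ≤ k} :=
    fun j => (measurable_Ncount j) (by trivial : MeasurableSet {m : ℕ | m ≤ k})
  have key : ∀ j : Fin (n+1),
      μ {ω | Ncount (X ω) j ≤ k} = μ {ω | Ncount (X ω) 0 ≤ k} := by
    intro j
    set σ := Equiv.swap (0 : Fin (n+1)) j with hσ
    have hσ0 : σ 0 = j := Equiv.swap_apply_left 0 j
    have h1 : {ω | Ncount (X ω) j ≤ k}
        = (fun ω => fun i => S (σ i) ω) ⁻¹' {x | Ncount x 0 ≤ k} := by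
      ext ω
      simp only [Set.mem_setOf_eq, Set.mem_preimage]
      have h2 : (fun i => S (σ i) ω) = (X ω) ∘ σ := rfl
      rw [h2, Ncount_comp, hσ0]
    have hmeas' : Measurable (fun ω => fun i => S (σ i) ω) :=
      measurable_pi_lambda _ fun i => hmeas (σ i)
    rw [h1, ← Measure.map_apply hmeas' (hB 0), hexch σ, Measure.map_apply hXmeas (hB 0)]
    rfl
  have hpt : ∀ ω, ∑ j : Fin (n+1),
      ({ω' : Ω | Ncount (X ω') j ≤ k}).indicator (1 : Ω → ℝ≥0∞) ω ≤ (k : ℝ≥0∞) := by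
    intro ω
    have h3 : ∑ j : Fin (n+1), ({ω' : Ω | Ncount (X ω') j ≤ k}).indicator (1 : Ω → ℝ≥0∞) ω
        = ((univ.filter fun j : Fin (n+1) => Ncount (X ω) j ≤ k).card : ℝ≥0∞) := by
      rw [Finset.card_filter]
      push_cast
      refine Finset.sum_congr rfl fun j _ => ?_
      by_cases h : Ncount (X ω) j ≤ k <;> simp [Set.indicator, h]
    rw [h3]
    exact_mod_cast Ncount_card_le (X ω) k
  have hsum : (((n:ℕ) + 1 : ℕ) : ℝ≥0∞) * μ {ω | Ncount (X ω) 0 ≤ k} ≤ (k : ℝ≥0∞) := by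
    have h1 : ∑ j : Fin (n+1), μ {ω | Ncount (X ω) j ≤ k}
        = (((n:ℕ) + 1 : ℕ) : ℝ≥0∞) * μ {ω | Ncount (X ω) 0 ≤ k} := by
      rw [Finset.sum_congr rfl fun j _ => key j, Finset.sum_const, card_univ,
        Fintype.card_fin, nsmul_eq_mul]
    rw [← h1]
    have hEmeas : ∀ j : Fin (n+1), MeasurableSet {ω | Ncount (X ω) j ≤ k} :=
      fun j => hXmeas (hB j)
    calc ∑ j : Fin (n+1), μ {ω | Ncount (X ω) j ≤ k}
        = ∑ j : Fin (n+1), ∫⁻ ω, ({ω' : Ω | Ncount (X ω') j ≤ k}).indicator (1 : Ω → ℝ≥0∞) ω ∂μ := by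
          refine Finset.sum_congr rfl fun j _ => ?_
          rw [lintegral_indicator_one (hEmeas j)]
      _ = ∫⁻ ω, ∑ j : Fin (n+1), ({ω' : Ω | Ncount (X ω') j ≤ k}).indicator (1 : Ω → ℝ≥0∞) ω ∂μ :=
          (lintegral_finset_sum _ fun j _ => measurable_one.indicator (hEmeas j)).symm
      _ ≤ ∫⁻ _, (k : ℝ≥0∞) ∂μ := lintegral_mono hpt
      _ = (k : ℝ≥0∞) := by simp
  have hset : {ω | p ω ≤ t} = {ω | Ncount (X ω) 0 ≤ k} := by
    ext ω
    simp only [Set.mem_setOf_eq]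
    rw [hp ω, Ncount_zero]
    have hn1 : (0:ℝ) < (n:ℝ) + 1 := by positivity
    rw [div_le_iff₀ hn1]
    set c := (univ.filter (fun i : Fin n => S i.succ ω ≥ S 0 ω)).card with hc
    constructor
    · intro h
      exact Nat.le_floor (by push_cast; linarith)
    · intro h
      have h4 : ((1 + c : ℕ) : ℝ) ≤ (k:ℝ) := by exact_mod_cast h
      have h5 := Nat.floor_le (mul_nonneg ht0 (le_of_lt hn1))
      push_cast at h4
      linarith [h5]
  rw [hset]
  have hkt : (k : ℝ≥0∞) ≤ ENNReal.ofReal t * (((n:ℕ) + 1 : ℕ) : ℝ≥0∞) := by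
    have h1 : (k:ℝ) ≤ t * ((n:ℝ)+1) := Nat.floor_le (mul_nonneg ht0 (by positivity))
    calc (k : ℝ≥0∞) = ENNReal.ofReal (k:ℝ) := (ENNReal.ofReal_natCast k).symm
      _ ≤ ENNReal.ofReal (t * ((n:ℝ)+1)) := ENNReal.ofReal_le_ofReal h1
      _ = ENNReal.ofReal t * ENNReal.ofReal ((n:ℝ)+1) := ENNReal.ofReal_mul ht0
      _ = ENNReal.ofReal t * (((n:ℕ) + 1 : ℕ) : ℝ≥0∞) := by
          congr 1
          rw [show ((n:ℝ)+1) = (((n+1 : ℕ)):ℝ) by push_cast; ring, ENNReal.ofReal_natCast]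
  have hne0 : (((n:ℕ) + 1 : ℕ) : ℝ≥0∞) ≠ 0 := by simp
  have hnetop : (((n:ℕ) + 1 : ℕ) : ℝ≥0∞) ≠ ⊤ := by simp
  have := hsum.trans hkt
  rw [mul_comm (ENNReal.ofReal t)] at this
  exact (ENNReal.mul_le_mul_iff_right hne0 hnetop).mp this
end

section
/- Let S_0, S_1, ..., S_n be i.i.d. real-valued random variables with a continuous distribution (so that all values are almost surely distinct), and define p = (1 + #{i ∈ {1,...,n} : S_i ≥ S_0}) / (n + 1). Then p is uniformly distributed on the finite set {1/(n+1), 2/(n+1), ..., (n+1)/(n+1)}, i.e., P(p = k/(n+1)) = 1/(n+1) for every k ∈ {1, ..., n+1}. -/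
open MeasureTheory ProbabilityTheory Finset

/-! The p-value is `R / (n + 1)`, where `R` is the rank of `S 0` in decreasing order among
`S 0, …, S n`. The joint law of the scores is a product of copies of one atomless law, so it is
invariant under permutations of the coordinates and its coordinates are a.s. distinct. Hence the
`n + 1` events `{the rank of S j is k}` are equally likely, and a.s. exactly one of them occurs,
so each has probability `1 / (n + 1)`. -/

section DescRank

variable {ι α : Type*} [Fintype ι] [LinearOrder α]

def descRank (x : ι → α) (j : ι) : ℕ := #{i | x j ≤ x i}

lemma one_le_descRank (x : ι → α) (j : ι) : 1 ≤ descRank x j :=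
  card_pos.2 ⟨j, by simp⟩

lemma descRank_le_card (x : ι → α) (j : ι) : descRank x j ≤ Fintype.card ι :=
  card_filter_le _ _

lemma descRank_lt_descRank_of_lt {x : ι → α} {j j' : ι} (h : x j < x j') :
    descRank x j' < descRank x j :=
  card_lt_card <| ssubset_iff_of_subset (monotone_filter_right _ fun _ _ => h.le.trans)
    |>.2 ⟨j, by simp [h.not_ge]⟩

lemma descRank_injective {x : ι → α} (hx : Function.Injective x) :
    Function.Injective (descRank x) := by
  intro j j' h
  by_contra hne
  rcases (hx.ne hne).lt_or_gt with hlt | hlt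
  · exact (descRank_lt_descRank_of_lt hlt).ne h.symm
  · exact (descRank_lt_descRank_of_lt hlt).ne h

lemma image_univ_descRank {x : ι → α} (hx : Function.Injective x) :
    univ.image (descRank x) = Icc 1 (Fintype.card ι) :=
  eq_of_subset_of_card_le
    (fun _ hk => by
      obtain ⟨j, -, rfl⟩ := mem_image.1 hk
      exact mem_Icc.2 ⟨one_le_descRank x j, descRank_le_card x j⟩)
    (by simp [card_image_of_injective _ (descRank_injective hx)])

lemma card_filter_descRank_eq_one {x : ι → α} (hx : Function.Injective x) {k : ℕ}
    (hk : k ∈ Icc 1 (Fintype.card ι)) : #{j | descRank x j = k} = 1 := by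
  obtain ⟨j, -, rfl⟩ := mem_image.1 (image_univ_descRank hx ▸ hk)
  exact card_eq_one.2 ⟨j, by ext; simp [(descRank_injective hx).eq_iff]⟩

lemma descRank_comp_perm (x : ι → α) (σ : Equiv.Perm ι) (j : ι) :
    descRank (x ∘ σ) j = descRank x (σ j) :=
  card_equiv σ (by simp)

lemma descRank_eq_card_succAbove_add_one {n : ℕ} (x : Fin (n + 1) → α) (j : Fin (n + 1)) :
    descRank x j = #{i : Fin n | x j ≤ x (j.succAbove i)} + 1 := by
  simp only [descRank, card_filter, Fin.sum_univ_succAbove _ j, le_refl, if_true]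
  ring

end DescRank

section AeInjective

variable {ι α Ω : Type*} [Fintype ι] [MeasurableSpace α] {mΩ : MeasurableSpace Ω}

lemma ProbabilityTheory.IndepFun.measure_eq_eq_zero [MeasurableEq α] {μ : Measure Ω}
    [IsFiniteMeasure μ] {X Y : Ω → α} (hXY : IndepFun X Y μ) (hX : Measurable X)
    (hY : Measurable Y) [NullSingletonClass (μ.map Y)] : μ {ω | X ω = Y ω} = 0 := by
  have hdiag : MeasurableSet (Set.diagonal α) := measurableSet_diagonal
  change μ ((fun ω => (X ω, Y ω)) ⁻¹' Set.diagonal α) = 0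
  rw [← Measure.map_apply (hX.prodMk hY) hdiag,
    (indepFun_iff_map_prod_eq_prod_map_map hX.aemeasurable hY.aemeasurable).1 hXY,
    Measure.prod_apply hdiag]
  simp [Set.diagonal, Set.preimage]

lemma ae_injective_pi [MeasurableEq α] (ν : Measure α) [IsProbabilityMeasure ν]
    [NullSingletonClass ν] :
    ∀ᵐ x ∂Measure.pi (fun _ : ι => ν), Function.Injective x := by
  suffices ∀ᵐ x ∂Measure.pi (fun _ : ι => ν), ∀ i j, i ≠ j → x i ≠ x j by
    filter_upwards [this] with x hx i j
    exact not_imp_not.1 (hx i j)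
  refine ae_all_iff.2 fun i => ae_all_iff.2 fun j => ?_
  rcases eq_or_ne i j with rfl | hij
  · simp
  have hindep : IndepFun (fun x : ι → α => x i) (fun x => x j) (Measure.pi fun _ => ν) :=
    (iIndepFun_pi (μ := fun _ : ι => ν) (X := fun _ (a : α) => a)
      fun _ => aemeasurable_id).indepFun hij
  have : NullSingletonClass ((Measure.pi fun _ : ι => ν).map (fun x => x j)) := by
    rw [(measurePreserving_eval _ j).map_eq]; infer_instance
  simpa [ae_iff, hij] using
    hindep.measure_eq_eq_zero (measurable_pi_apply i) (measurable_pi_apply j)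

end AeInjective

section Exchangeable

variable {ι α : Type*} [Fintype ι] [MeasurableSpace α]

lemma measurePreserving_comp_perm_pi (ν : Measure α) [SigmaFinite ν] (σ : Equiv.Perm ι) :
    MeasurePreserving (fun x : ι → α => x ∘ σ) (Measure.pi fun _ => ν)
      (Measure.pi fun _ => ν) :=
  measurePreserving_arrowCongr' _ _ σ.symm (MeasurableEquiv.refl α) fun _ => .id ν

variable [LinearOrder α] [TopologicalSpace α] [OrderClosedTopology α] [OpensMeasurableSpace α]
  [SecondCountableTopology α]

lemma measurable_descRank (j : ι) : Measurable fun x : ι → α => descRank x j := by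
  simp only [descRank, card_filter]
  exact Finset.measurable_sum _ fun i _ => Measurable.ite
    (measurableSet_le (measurable_pi_apply j) (measurable_pi_apply i)) measurable_const
    measurable_const

lemma measurableSet_descRank_eq (j : ι) (k : ℕ) :
    MeasurableSet {x : ι → α | descRank x j = k} :=
  measurable_descRank j (measurableSet_singleton k)

theorem card_mul_measure_descRank_eq {π : Measure (ι → α)}
    (hperm : ∀ σ : Equiv.Perm ι, MeasurePreserving (· ∘ σ) π π)
    (hinj : ∀ᵐ x ∂π, Function.Injective x) {k : ℕ} (hk : k ∈ Icc 1 (Fintype.card ι))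
    (j : ι) :
    Fintype.card ι * π {x | descRank x j = k} = π Set.univ := by
  classical
  set A : ι → Set (ι → α) := fun j => {x | descRank x j = k}
  have hsymm (j' : ι) : π (A j') = π (A j) := by
    simpa [A, Set.preimage, descRank_comp_perm] using
      (hperm (Equiv.swap j j')).measure_preimage
        (measurableSet_descRank_eq j k).nullMeasurableSet
  have hcount : ∀ᵐ x ∂π, ∑ j', (A j').indicator 1 x = (1 : ENNReal) := by
    filter_upwards [hinj] with x hx
    simp [A, Set.indicator_apply, sum_boole, card_filter_descRank_eq_one hx hk]
  calc (Fintype.card ι : ENNReal) * π (A j) = ∑ j', π (A j') := by simp [hsymm]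
    _ = ∫⁻ x, ∑ j', (A j').indicator 1 x ∂π := by
      rw [lintegral_finsetSum _ fun j' _ =>
        measurable_one.indicator (measurableSet_descRank_eq j' k)]
      simp [A, lintegral_indicator_one (measurableSet_descRank_eq _ k)]
    _ = π Set.univ := by rw [lintegral_congr_ae hcount, lintegral_one]

end Exchangeable

/-- The conformal p-value from i.i.d. continuous scores is uniformly distributed on
the grid {1/(n+1), ..., (n+1)/(n+1)}. -/
theorem conformal_pvalue_discrete_uniform
    {Ω : Type*} [MeasurableSpace Ω] (μ : Measure Ω) [IsProbabilityMeasure μ]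
    {n : ℕ} (S : Fin (n + 1) → Ω → ℝ) (hmeas : ∀ i, Measurable (S i))
    (hindep : iIndepFun (m := fun _ => Real.measurableSpace) S μ)
    (hident : ∀ i, Measure.map (S i) μ = Measure.map (S 0) μ)
    (hcont : ∀ x : ℝ, Measure.map (S 0) μ {x} = 0)
    (p : Ω → ℝ)
    (hp : ∀ ω, p ω =
      (1 + ((Finset.univ.filter (fun i : Fin n => S i.succ ω ≥ S 0 ω)).card : ℝ)) / (n + 1)) :
    ∀ k : ℕ, 1 ≤ k → k ≤ n + 1 →
      μ {ω | p ω = (k : ℝ) / (n + 1)} = 1 / (n + 1) := by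
  intro k hk1 hkn
  set ν := μ.map (S 0)
  have : IsProbabilityMeasure ν := Measure.isProbabilityMeasure_map (hmeas 0).aemeasurable
  have : NullSingletonClass ν := ⟨hcont⟩
  have hlaw : μ.map (fun ω i => S i ω) = Measure.pi fun _ => ν := by
    rw [hindep.map_fun_eq_pi_map fun i => (hmeas i).aemeasurable]
    simp_rw [hident]
  have hpre :
      {ω | p ω = (k : ℝ) / (n + 1)} = (fun ω i => S i ω) ⁻¹' {x | descRank x 0 = k} := by
    ext ω
    have : (n : ℝ) + 1 ≠ 0 := by positivity
    simp [hp, descRank_eq_card_succAbove_add_one, div_left_inj' this, add_comm (1 : ℝ)]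
    norm_cast
  have hk : k ∈ Icc 1 (Fintype.card (Fin (n + 1))) := by simp [hk1, hkn]
  have hcard := card_mul_measure_descRank_eq (measurePreserving_comp_perm_pi ν)
    (ae_injective_pi ν) hk 0
  rw [hpre, ← Measure.map_apply (measurable_pi_lambda _ hmeas)
    (measurableSet_descRank_eq 0 k), hlaw]
  simp only [Fintype.card_fin, Nat.cast_add, Nat.cast_one, measure_univ] at hcard
  exact (ENNReal.eq_div_iff (by simp) (by simp)).2 hcard
end

section
/- Let p_1, ..., p_m ∈ (0,1], α ∈ (0,1), θ > 0. Define T_sup = sup{t ∈ [0,1] : θ·m·t / max(1, #{j : p_j ≤ t}) ≤ α}. Then the step-up rejection set R = {j : p_j ≤ p_(l̂)} with l̂ = max{l : p_(l) ≤ lα/(θm)} (empty if no such l) equals the thresholding set {j : p_j ≤ T_sup}. -/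
open Finset

/-- The set of indices `l` (0-based, representing order statistic `l+1`) at which the
weighted step-up boundary is met: `p_(l+1) ≤ (l+1)·α/(θ·m)`. -/
noncomputable def stepUpIdx {m : ℕ} (p : Fin m → ℝ) (α θ : ℝ) : Finset (Fin m) :=
  Finset.univ.filter fun l => p (Tuple.sort p l) ≤ ((l : ℕ) + 1) * α / (θ * m)

/-- The rejection set of the weighted Benjamini–Hochberg step-up procedure:
all `j` with `p j ≤ p_(l̂)`, where `l̂` is the largest index meeting the boundary;
empty if no index meets the boundary. -/
noncomputable def stepUpReject {m : ℕ} (p : Fin m → ℝ) (α θ : ℝ) : Finset (Fin m) :=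
  if h : (stepUpIdx p α θ).Nonempty then
    Finset.univ.filter fun j => p j ≤ p (Tuple.sort p ((stepUpIdx p α θ).max' h))
  else ∅

/-- The data-driven threshold `T = p_(l̂)` of the weighted step-up procedure (0 if no
index meets the boundary). -/
noncomputable def stepUpThreshold {m : ℕ} (p : Fin m → ℝ) (α θ : ℝ) : ℝ :=
  if h : (stepUpIdx p α θ).Nonempty then p (Tuple.sort p ((stepUpIdx p α θ).max' h)) else 0

lemma sort_le_iff_lt_card {m : ℕ} (p : Fin m → ℝ) (t : ℝ) (i : Fin m) :
    p (Tuple.sort p i) ≤ t ↔ (i : ℕ) < (Finset.univ.filter fun j => p j ≤ t).card := by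
  classical
  set σ := Tuple.sort p with hσ
  have hmono : Monotone (p ∘ σ) := Tuple.monotone_sort p
  set B : Finset (Fin m) := Finset.univ.filter fun i => p (σ i) ≤ t with hB
  have hcard : B.card = (Finset.univ.filter fun j => p j ≤ t).card := by
    have hmap : B = (Finset.univ.filter fun j => p j ≤ t).map σ.symm.toEmbedding := by
      ext i
      simp [hB, Equiv.symm_apply_eq, eq_comm]
    rw [hmap, Finset.card_map]
  have hdown : ∀ a b : Fin m, a ≤ b → b ∈ B → a ∈ B := by
    intro a b hab hb
    simp only [hB, Finset.mem_filter, Finset.mem_univ, true_and] at hb ⊢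
    exact le_trans (hmono hab) hb
  rw [← hcard]
  constructor
  · intro h
    have hsub : Finset.Iic i ⊆ B := fun a ha =>
      hdown a i (Finset.mem_Iic.mp ha) (by simp [hB, h])
    have := Finset.card_le_card hsub
    rw [Fin.card_Iic] at this
    omega
  · intro h
    by_contra hc
    have hsub : B ⊆ Finset.Iio i := by
      intro a ha
      rw [Finset.mem_Iio]
      by_contra hai
      exact hc (by simpa [hB] using hdown i a (not_lt.mp hai) ha)
    have := Finset.card_le_card hsub
    rw [Fin.card_Iio] at this
    omega

/-- Equivalence between the step-up formulation and the fixed-point/threshold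
formulation of the weighted BH procedure. -/
theorem stepUp_eq_threshold_formulation
    {m : ℕ} (p : Fin m → ℝ) (hp : ∀ j, p j ∈ Set.Ioc (0 : ℝ) 1)
    (α θ : ℝ) (hα : α ∈ Set.Ioo (0 : ℝ) 1) (hθ : 0 < θ)
    (Tsup : ℝ)
    (hTsup : Tsup = sSup {t : ℝ | t ∈ Set.Icc (0 : ℝ) 1 ∧
      θ * m * t / max 1 (((Finset.univ.filter fun j => p j ≤ t).card : ℝ)) ≤ α}) :
    stepUpReject p α θ = Finset.univ.filter fun j => p j ≤ Tsup := by
  classical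
  subst hTsup
  rcases Nat.eq_zero_or_pos m with hm | hm
  · subst hm
    rw [Finset.eq_empty_of_isEmpty (stepUpReject p α θ),
        Finset.eq_empty_of_isEmpty (Finset.univ.filter _)]
  set σ := Tuple.sort p with hσ
  set N : ℝ → ℕ := fun t => (Finset.univ.filter fun j => p j ≤ t).card with hN
  set S : Set ℝ := {t : ℝ | t ∈ Set.Icc (0 : ℝ) 1 ∧
      θ * m * t / max 1 (((Finset.univ.filter fun j => p j ≤ t).card : ℝ)) ≤ α} with hS
  have hmR : (0:ℝ) < m := by exact_mod_cast hm
  have hθm : (0:ℝ) < θ * m := mul_pos hθ hmR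
  have hS0 : (0:ℝ) ∈ S := by
    refine ⟨⟨le_refl 0, zero_le_one⟩, ?_⟩
    simp only [mul_zero, zero_div]
    exact hα.1.le
  have hSbdd : BddAbove S := ⟨1, fun t ht => ht.1.2⟩
  have hSmem : ∀ t ∈ S, θ * m * t ≤ α * max 1 ((N t : ℝ)) := by
    intro t ht
    have h2 := ht.2
    have hpos : (0:ℝ) < max 1 ((N t : ℝ)) := lt_of_lt_of_le one_pos (le_max_left _ _)
    rw [div_le_iff₀ hpos] at h2
    linarith
  have hNm : ∀ t : ℝ, N t ≤ m := fun t =>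
    le_trans (Finset.card_filter_le _ _) (by simp)
  -- if t ∈ S and N t ≥ 1 then index (N t - 1) meets the step-up boundary
  have hmem : ∀ t ∈ S, ∀ h1 : 1 ≤ N t,
      (⟨N t - 1, lt_of_lt_of_le (Nat.sub_lt h1 one_pos) (hNm t)⟩ : Fin m) ∈ stepUpIdx p α θ := by
    intro t ht h1
    simp only [stepUpIdx, Finset.mem_filter, Finset.mem_univ, true_and]
    have hle : p (σ ⟨N t - 1, lt_of_lt_of_le (Nat.sub_lt h1 one_pos) (hNm t)⟩) ≤ t :=
      (sort_le_iff_lt_card p t _).mpr (Nat.sub_lt h1 one_pos)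
    have hmax : max 1 ((N t : ℝ)) = (N t : ℝ) :=
      max_eq_right (by exact_mod_cast h1)
    have h2 := hSmem t ht
    rw [hmax] at h2
    have hcast : ((N t - 1 : ℕ) : ℝ) + 1 = (N t : ℝ) := by
      push_cast [h1]
      ring
    rw [le_div_iff₀ hθm, hcast]
    nlinarith
  set T := stepUpThreshold p α θ with hT
  set k := N T with hk
  obtain ⟨hTS, hNle, hblock, hreject⟩ :
      T ∈ S ∧ (∀ t ∈ S, N t ≤ k) ∧
      (∀ hkm : k < m, ¬ p (σ ⟨k, hkm⟩) ≤ ((k:ℝ) + 1) * α / (θ * m)) ∧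
      stepUpReject p α θ = Finset.univ.filter fun j => p j ≤ T := by
    by_cases h : (stepUpIdx p α θ).Nonempty
    · set l := (stepUpIdx p α θ).max' h with hl
      have hTval : T = p (σ l) := by rw [hT, stepUpThreshold, dif_pos h]
      have hlmem : l ∈ stepUpIdx p α θ := (stepUpIdx p α θ).max'_mem h
      have hlb : p (σ l) ≤ ((l:ℕ) + 1) * α / (θ * m) := by
        simpa [stepUpIdx] using hlmem
      have hlk : (l : ℕ) < k := by
        rw [hk, hN]
        exact (sort_le_iff_lt_card p T l).mp (le_of_eq hTval.symm)
      have hTS : T ∈ S := by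
        refine ⟨⟨?_, ?_⟩, ?_⟩
        · rw [hTval]; exact (hp (σ l)).1.le
        · rw [hTval]; exact (hp (σ l)).2
        · have hpos : (0:ℝ) < max 1 ((N T : ℝ)) := lt_of_lt_of_le one_pos (le_max_left _ _)
          rw [div_le_iff₀ hpos]
          have h1 : θ * m * T ≤ ((l:ℕ) + 1) * α := by
            rw [hTval]
            rw [le_div_iff₀ hθm] at hlb
            linarith
          have h2 : ((l:ℕ) + 1 : ℝ) ≤ (N T : ℝ) := by exact_mod_cast hlk
          have h3 : (N T : ℝ) ≤ max 1 ((N T : ℝ)) := le_max_right _ _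
          nlinarith [hα.1]
      refine ⟨hTS, ?_, ?_, ?_⟩
      · intro t ht
        by_cases h1 : 1 ≤ N t
        · have hi := hmem t ht h1
          have := (stepUpIdx p α θ).le_max' _ hi
          have hle : N t - 1 ≤ (l : ℕ) := this
          omega
        · omega
      · intro hkm hc
        have hi : (⟨k, hkm⟩ : Fin m) ∈ stepUpIdx p α θ := by
          simp only [stepUpIdx, Finset.mem_filter, Finset.mem_univ, true_and]
          exact hc
        have := (stepUpIdx p α θ).le_max' _ hi
        have : (k : ℕ) ≤ (l : ℕ) := this
        omega
      · rw [stepUpReject, dif_pos h, hTval]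
    · have hTval : T = 0 := by rw [hT, stepUpThreshold, dif_neg h]
      have hk0 : k = 0 := by
        rw [hk, hN, hTval, Finset.card_eq_zero]
        refine Finset.filter_false_of_mem fun j _ => ?_
        exact not_le.mpr (hp j).1
      refine ⟨by rw [hTval]; exact hS0, ?_, ?_, ?_⟩
      · intro t ht
        by_cases h1 : 1 ≤ N t
        · exact absurd ⟨_, hmem t ht h1⟩ h
        · omega
      · intro hkm hc
        refine h ⟨⟨k, hkm⟩, ?_⟩
        simp only [stepUpIdx, Finset.mem_filter, Finset.mem_univ, true_and]
        exact hc
      · rw [stepUpReject, dif_neg h, hTval]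
        symm
        refine Finset.filter_false_of_mem fun j _ => ?_
        exact not_le.mpr (hp j).1
  set B : ℝ := α * max 1 (k : ℝ) / (θ * m) with hB
  have hTB : T ≤ B := by
    have h1 := hSmem T hTS
    rw [hB, le_div_iff₀ hθm]
    rw [← hk] at h1
    linarith
  have hSupB : sSup S ≤ B := by
    refine csSup_le ⟨0, hS0⟩ fun t ht => ?_
    have h1 := hSmem t ht
    have h2 : max 1 ((N t : ℝ)) ≤ max 1 ((k : ℝ)) :=
      max_le_max le_rfl (by exact_mod_cast hNle t ht)
    rw [hB, le_div_iff₀ hθm]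
    nlinarith [mul_le_mul_of_nonneg_left h2 hα.1.le]
  have hTsupT : T ≤ sSup S := le_csSup hSbdd hTS
  rw [hreject]
  ext j
  simp only [Finset.mem_filter, Finset.mem_univ, true_and]
  constructor
  · exact fun hj => hj.trans hTsupT
  · intro hj
    by_contra hjT
    push_neg at hjT
    set i := σ.symm j with hi
    have hpj : p (σ i) = p j := by simp [hi]
    have hik : ¬ ((i : ℕ) < k) := by
      rw [hk, hN, ← sort_le_iff_lt_card p T i]
      rw [hpj]
      exact not_le.mpr hjT
    have hkm : k < m := lt_of_le_of_lt (not_lt.mp hik) i.isLt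
    have hmono : p (σ ⟨k, hkm⟩) ≤ p (σ i) :=
      Tuple.monotone_sort p (show (⟨k, hkm⟩ : Fin m) ≤ i from not_lt.mp hik)
    have hblk := hblock hkm
    push_neg at hblk
    have hBlt : B < p (σ ⟨k, hkm⟩) := by
      have hmx : max 1 ((k:ℝ)) ≤ (k:ℝ) + 1 := by
        rcases Nat.eq_zero_or_pos k with h0 | h0
        · simp [h0]
        · rw [max_eq_right (by exact_mod_cast h0)]; linarith
      have hnum : α * max 1 ((k:ℝ)) ≤ ((k:ℝ) + 1) * α := by
        nlinarith [mul_le_mul_of_nonneg_left hmx hα.1.le]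
      have : B ≤ ((k:ℝ) + 1) * α / (θ * m) := by
        rw [hB]
        exact (div_le_div_iff_of_pos_right hθm).mpr hnum
      linarith
    rw [hpj] at hmono
    linarith
end

section
/- Let e_1, ..., e_m be nonnegative random variables and let N ⊆ {1,...,m} (the null indices) be such that E[e_j] ≤ 1 for every j ∈ N. Fix α ∈ (0,1). Let e_(1) ≥ ... ≥ e_(m) be the order statistics in decreasing order, define l̂ = max{l ∈ {1,...,m} : e_(l) ≥ m/(lα)} (with rejection set empty if no such l), and reject R = {j : e_j ≥ e_(l̂)}. Then the false discovery rate satisfies E[ #(R ∩ N) / max(1, |R|) ] ≤ α·|N|/m ≤ α. -/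
open MeasureTheory

open Finset

/-- The rejection set of the e-BH procedure at level α: with e-values sorted in
decreasing order `e_(1) ≥ ... ≥ e_(m)`, let `l̂ = max{l : e_(l) ≥ m/(l·α)}` and reject
all `j` with `e j ≥ e_(l̂)`; reject nothing if no such `l` exists. -/
noncomputable def eBHReject {m : ℕ} (e : Fin m → ℝ) (α : ℝ) : Finset (Fin m) :=
  let desc : Equiv.Perm (Fin m) := Tuple.sort (fun j => -(e j))
  if h : (Finset.univ.filter fun l : Fin m =>
      e (desc l) ≥ (m : ℝ) / (((l : ℕ) + 1) * α)).Nonempty then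
    Finset.univ.filter fun j => e j ≥
      e (desc ((Finset.univ.filter fun l : Fin m =>
        e (desc l) ≥ (m : ℝ) / (((l : ℕ) + 1) * α)).max' h))
  else ∅

lemma eBH_pointwise {m : ℕ} (e : Fin m → ℝ) (hnonneg : ∀ j, 0 ≤ e j)
    (N : Finset (Fin m)) {α : ℝ} (hα : 0 < α) :
    ((eBHReject e α ∩ N).card : ℝ) / max 1 ((eBHReject e α).card : ℝ)
      ≤ α / m * ∑ j ∈ N, e j := by
  have hRHS : 0 ≤ α / m * ∑ j ∈ N, e j :=
    mul_nonneg (by positivity) (Finset.sum_nonneg fun j _ => hnonneg j)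
  set desc : Equiv.Perm (Fin m) := Tuple.sort (fun j => -(e j)) with hdesc
  set S : Finset (Fin m) := Finset.univ.filter fun l : Fin m =>
      e (desc l) ≥ (m : ℝ) / (((l : ℕ) + 1) * α) with hS
  by_cases h : S.Nonempty
  · set lhat := S.max' h with hlhat
    have hR : eBHReject e α = Finset.univ.filter fun j => e j ≥ e (desc lhat) := by
      rw [eBHReject]
      simp only [← hdesc, ← hS, dif_pos h, ← hlhat]
    have hmem : lhat ∈ S := S.max'_mem h
    have hT : e (desc lhat) ≥ (m : ℝ) / (((lhat : ℕ) + 1) * α) := by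
      simpa [hS] using hmem
    have hm : 0 < m := lhat.pos
    set R := eBHReject e α with hRdef
    -- all desc l' for l' ≤ lhat are in R
    have hsub : ∀ l' : Fin m, l' ≤ lhat → desc l' ∈ R := by
      intro l' hl'
      have := Tuple.monotone_sort (fun j => -(e j)) hl'
      simp only [Function.comp] at this
      rw [hR]
      simp only [mem_filter, mem_univ, true_and, ge_iff_le]
      linarith
    have hcard : (lhat : ℕ) + 1 ≤ R.card := by
      have himg : (Finset.Iic lhat).image desc ⊆ R := by
        intro x hx
        obtain ⟨l', hl', rfl⟩ := Finset.mem_image.mp hx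
        exact hsub l' (Finset.mem_Iic.mp hl')
      calc (lhat : ℕ) + 1 = ((Finset.Iic lhat).image desc).card := by
            rw [Finset.card_image_of_injective _ desc.injective, Fin.card_Iic]
        _ ≤ R.card := Finset.card_le_card himg
    have hRpos : 0 < R.card := by omega
    have hmax : max 1 ((R.card : ℝ)) = R.card := by
      rw [max_eq_right]; exact_mod_cast hRpos
    -- each j in R has e j ≥ m / (R.card * α)
    have hjR : ∀ j ∈ R, (m : ℝ) / (R.card * α) ≤ e j := by
      intro j hj
      have h1 : (m : ℝ) / (R.card * α) ≤ (m : ℝ) / (((lhat : ℕ) + 1) * α) := by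
        apply div_le_div_of_nonneg_left (by positivity) (by positivity)
        have : ((lhat : ℕ) + 1 : ℝ) ≤ R.card := by exact_mod_cast hcard
        nlinarith
      have h2 : e (desc lhat) ≤ e j := by
        rw [hR] at hj; simpa using hj
      linarith
    have key : ∀ j ∈ R ∩ N, (1 : ℝ) / R.card ≤ α / m * e j := by
      intro j hj
      have hj' := hjR j (Finset.mem_inter.mp hj).1
      rw [div_le_iff₀ (by positivity)] at hj' ⊢
      have hm' : (0:ℝ) < m := by exact_mod_cast hm
      rw [div_mul_eq_mul_div, div_mul_eq_mul_div, le_div_iff₀ hm']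
      nlinarith
    have hsum : ((R ∩ N).card : ℝ) * (1 / R.card) ≤ ∑ j ∈ R ∩ N, α / m * e j := by
      have := Finset.card_nsmul_le_sum (R ∩ N) (fun j => α / m * e j) (1 / (R.card:ℝ)) key
      simpa [nsmul_eq_mul] using this
    have hsum2 : ∑ j ∈ R ∩ N, α / m * e j ≤ ∑ j ∈ N, α / m * e j := by
      apply Finset.sum_le_sum_of_subset_of_nonneg (Finset.inter_subset_right)
      intro i _ _; exact mul_nonneg (by positivity) (hnonneg i)
    rw [hmax]
    calc ((R ∩ N).card : ℝ) / R.card = ((R ∩ N).card : ℝ) * (1 / R.card) := by ring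
      _ ≤ ∑ j ∈ N, α / m * e j := le_trans hsum hsum2
      _ = α / m * ∑ j ∈ N, e j := by rw [Finset.mul_sum]
  · have hR : eBHReject e α = ∅ := by
      rw [eBHReject]
      simp only [← hdesc, ← hS, dif_neg h]
    rw [hR]
    simpa using hRHS

/-- FDR control of the e-BH procedure: if the null e-values have expectation at most 1,
the false discovery rate is at most α·|N|/m ≤ α. -/
theorem eBH_FDR_control
    {Ω : Type*} [MeasurableSpace Ω] (μ : Measure Ω) [IsProbabilityMeasure μ]
    {m : ℕ} (e : Fin m → Ω → ℝ)
    (hmeas : ∀ j, Measurable (e j)) (hnonneg : ∀ j ω, 0 ≤ e j ω)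
    (N : Finset (Fin m))
    (hint : ∀ j ∈ N, Integrable (e j) μ)
    (hnull : ∀ j ∈ N, ∫ ω, e j ω ∂μ ≤ 1)
    (α : ℝ) (hα : α ∈ Set.Ioo (0 : ℝ) 1) :
    (∫ ω, (((eBHReject (fun j => e j ω) α) ∩ N).card : ℝ) /
        max 1 (((eBHReject (fun j => e j ω) α).card : ℝ)) ∂μ)
      ≤ α * N.card / m ∧
    α * N.card / m ≤ α := by
  obtain ⟨hα0, hα1⟩ := hα
  constructor
  · have hg : Integrable (fun ω => α / m * ∑ j ∈ N, e j ω) μ :=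
      (integrable_finset_sum N (fun j hj => hint j hj)).const_mul _
    have hle : (∫ ω, (((eBHReject (fun j => e j ω) α) ∩ N).card : ℝ) /
        max 1 (((eBHReject (fun j => e j ω) α).card : ℝ)) ∂μ)
        ≤ ∫ ω, α / m * ∑ j ∈ N, e j ω ∂μ := by
      apply integral_mono_of_nonneg
      · filter_upwards with ω
        positivity
      · exact hg
      · filter_upwards with ω
        exact eBH_pointwise (fun j => e j ω) (fun j => hnonneg j ω) N hα0
    have heq : (∫ ω, α / m * ∑ j ∈ N, e j ω ∂μ) = α / m * ∑ j ∈ N, ∫ ω, e j ω ∂μ := by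
      rw [integral_const_mul, integral_finset_sum N (fun j hj => hint j hj)]
    have hsum : ∑ j ∈ N, ∫ ω, e j ω ∂μ ≤ N.card := by
      have := Finset.sum_le_card_nsmul N (fun j => ∫ ω, e j ω ∂μ) 1 (fun j hj => hnull j hj)
      simpa [nsmul_eq_mul] using this
    calc _ ≤ α / m * ∑ j ∈ N, ∫ ω, e j ω ∂μ := by rw [← heq]; exact hle
      _ ≤ α / m * N.card := by
          apply mul_le_mul_of_nonneg_left hsum (by positivity)
      _ = α * N.card / m := by ring
  · rcases Nat.eq_zero_or_pos m with hm | hm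
    · simp [hm]; positivity
    · have hNm : (N.card : ℝ) ≤ m := by
        exact_mod_cast (N.card_le_univ.trans_eq (by simp))
      rw [div_le_iff₀ (by exact_mod_cast hm)]
      nlinarith
end

section
/- Let S_0, S_1, ..., S_n be exchangeable real-valued random variables and let t ∈ ℝ be a fixed threshold. Define e = (n + 1) · 1{S_0 ≥ t} / (1 + Σ_{i=1}^n 1{S_i ≥ t}). Then E[e] ≤ 1, i.e., e is a valid e-value. -/
open MeasureTheory Finset

noncomputable def cInd (t x : ℝ) : ℝ := if x ≥ t then 1 else 0

lemma cInd_nonneg (t x : ℝ) : 0 ≤ cInd t x := by unfold cInd; split <;> norm_num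

lemma cInd_le_one (t x : ℝ) : cInd t x ≤ 1 := by unfold cInd; split <;> norm_num

noncomputable def cF (n : ℕ) (t : ℝ) (x : Fin (n + 1) → ℝ) : ℝ :=
  ((n : ℝ) + 1) * cInd t (x 0) / (1 + ∑ i : Fin n, cInd t (x i.succ))

lemma cF_denom_pos (n : ℕ) (t : ℝ) (x : Fin (n + 1) → ℝ) :
    (1 : ℝ) ≤ 1 + ∑ i : Fin n, cInd t (x i.succ) := by
  have : (0:ℝ) ≤ ∑ i : Fin n, cInd t (x i.succ) :=
    Finset.sum_nonneg fun i _ => cInd_nonneg _ _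
  linarith

lemma cF_nonneg (n : ℕ) (t : ℝ) (x : Fin (n + 1) → ℝ) : 0 ≤ cF n t x := by
  unfold cF
  apply div_nonneg
  · exact mul_nonneg (by positivity) (cInd_nonneg _ _)
  · linarith [cF_denom_pos n t x]

lemma cF_le (n : ℕ) (t : ℝ) (x : Fin (n + 1) → ℝ) : cF n t x ≤ (n : ℝ) + 1 := by
  unfold cF
  have h1 : ((n : ℝ) + 1) * cInd t (x 0) ≤ (n : ℝ) + 1 := by
    have := cInd_le_one t (x 0)
    nlinarith [cInd_nonneg t (x 0)]
  calc ((n : ℝ) + 1) * cInd t (x 0) / (1 + ∑ i : Fin n, cInd t (x i.succ))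
      ≤ ((n : ℝ) + 1) * cInd t (x 0) := by
        apply div_le_self (mul_nonneg (by positivity) (cInd_nonneg _ _)) (cF_denom_pos n t x)
    _ ≤ (n : ℝ) + 1 := h1

lemma measurable_cF (n : ℕ) (t : ℝ) : Measurable (cF n t) := by
  unfold cF cInd
  apply Measurable.div
  · apply Measurable.mul measurable_const
    exact Measurable.ite (measurableSet_le measurable_const (measurable_pi_apply 0))
      measurable_const measurable_const
  · apply Measurable.add measurable_const
    apply Finset.measurable_sum
    intro i _
    exact Measurable.ite (measurableSet_le measurable_const (measurable_pi_apply i.succ))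
      measurable_const measurable_const

lemma key_pointwise (n : ℕ) (t : ℝ) (x : Fin (n + 1) → ℝ) :
    ∑ j : Fin (n + 1), cF n t (fun i => x (Equiv.swap 0 j i)) ≤ (n : ℝ) + 1 := by
  set K : ℝ := ∑ k : Fin (n + 1), cInd t (x k) with hK
  have hK0 : 0 ≤ K := Finset.sum_nonneg fun k _ => cInd_nonneg _ _
  have hterm : ∀ j : Fin (n + 1),
      cF n t (fun i => x (Equiv.swap 0 j i)) = cInd t (x j) * (((n : ℝ) + 1) / K) := by
    intro j
    have hsum : ∑ i : Fin n, cInd t (x (Equiv.swap 0 j i.succ)) = K - cInd t (x j) := by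
      have h1 : ∑ k : Fin (n + 1), cInd t (x (Equiv.swap 0 j k)) = K :=
        Equiv.sum_comp (Equiv.swap 0 j) (fun k => cInd t (x k))
      rw [Fin.sum_univ_succ] at h1
      rw [Equiv.swap_apply_left] at h1
      linarith
    unfold cF
    simp only []
    rw [hsum, Equiv.swap_apply_left]
    by_cases h : x j ≥ t
    · have hind : cInd t (x j) = 1 := if_pos h
      have hK1 : (1 : ℝ) ≤ K := by
        have h2 : cInd t (x j) ≤ K := by
          simpa [hK] using Finset.single_le_sum (f := fun k => cInd t (x k))
            (fun k _ => cInd_nonneg _ _) (Finset.mem_univ j)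
        rw [hind] at h2
        linarith
      rw [hind]
      have : 1 + (K - 1) = K := by ring
      rw [this]
      ring
    · have hind : cInd t (x j) = 0 := if_neg h
      rw [hind]
      simp
  rw [Finset.sum_congr rfl (fun j _ => hterm j), ← Finset.sum_mul, ← hK]
  by_cases hKz : K = 0
  · rw [hKz]; simp; positivity
  · rw [div_eq_mul_inv, ← mul_assoc, mul_comm K, mul_assoc,
      mul_inv_cancel₀ hKz, mul_one]

/-- Validity of the threshold-based conformal e-value: its expectation is at most 1. -/
theorem conformal_evalue_valid
    {Ω : Type*} [MeasurableSpace Ω] (μ : Measure Ω) [IsProbabilityMeasure μ]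
    {n : ℕ} (S : Fin (n + 1) → Ω → ℝ) (hmeas : ∀ i, Measurable (S i))
    (hexch : Exchangeable μ S) (t : ℝ)
    (e : Ω → ℝ)
    (he : ∀ ω, e ω = ((n : ℝ) + 1) * (if S 0 ω ≥ t then 1 else 0) /
      (1 + ((Finset.univ.filter (fun i : Fin n => S i.succ ω ≥ t)).card : ℝ))) :
    ∫ ω, e ω ∂μ ≤ 1 := by
  have hmeasmap : Measurable (fun ω => fun i => S i ω) := measurable_pi_iff.mpr hmeas
  set ν : Measure (Fin (n + 1) → ℝ) := μ.map (fun ω => fun i => S i ω) with hν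
  haveI : IsProbabilityMeasure ν := Measure.isProbabilityMeasure_map hmeasmap.aemeasurable
  -- e ω = cF n t (S · ω)
  have he' : ∀ ω, e ω = cF n t (fun i => S i ω) := by
    intro ω
    rw [he]
    unfold cF cInd
    congr 2
    rw [Finset.card_filter]
    push_cast
    rfl
  -- reindexing measurable
  have hre : ∀ σ : Equiv.Perm (Fin (n + 1)),
      Measurable (fun (x : Fin (n + 1) → ℝ) => fun i => x (σ i)) :=
    fun σ => measurable_pi_iff.mpr fun i => measurable_pi_apply _
  -- each permuted integral equals ∫ cF dν
  have hσ : ∀ σ : Equiv.Perm (Fin (n + 1)),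
      (∫ x, cF n t (fun i => x (σ i)) ∂ν) = ∫ x, cF n t x ∂ν := by
    intro σ
    have hm2 : Measurable (fun ω => fun i => S (σ i) ω) :=
      measurable_pi_iff.mpr fun i => hmeas (σ i)
    calc (∫ x, cF n t (fun i => x (σ i)) ∂ν)
        = ∫ ω, cF n t (fun i => S (σ i) ω) ∂μ := by
          rw [hν]
          exact integral_map hmeasmap.aemeasurable
            (((measurable_cF n t).comp (hre σ)).aestronglyMeasurable)
      _ = ∫ x, cF n t x ∂(μ.map (fun ω => fun i => S (σ i) ω)) :=
          (integral_map hm2.aemeasurable (measurable_cF n t).aestronglyMeasurable).symm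
      _ = ∫ x, cF n t x ∂ν := by rw [hν, hexch σ]
  -- integrability
  have hint : ∀ σ : Equiv.Perm (Fin (n + 1)),
      Integrable (fun x => cF n t (fun i => x (σ i))) ν := by
    intro σ
    refine ⟨((measurable_cF n t).comp (hre σ)).aestronglyMeasurable, ?_⟩
    apply HasFiniteIntegral.of_bounded (C := (n : ℝ) + 1)
    filter_upwards with x
    rw [Real.norm_eq_abs, abs_of_nonneg (cF_nonneg n t _)]
    exact cF_le n t _
  -- main computation
  have hIμ : ∫ ω, e ω ∂μ = ∫ x, cF n t x ∂ν := by
    have h0 : ∫ ω, e ω ∂μ = ∫ ω, cF n t (fun i => S i ω) ∂μ :=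
      integral_congr_ae (Filter.Eventually.of_forall he')
    rw [h0, hν]
    exact (integral_map hmeasmap.aemeasurable (measurable_cF n t).aestronglyMeasurable).symm
  set I : ℝ := ∫ x, cF n t x ∂ν with hI
  have hmain : ((n : ℝ) + 1) * I ≤ (n : ℝ) + 1 := by
    have h1 : ((n : ℝ) + 1) * I
        = ∑ j : Fin (n + 1), ∫ x, cF n t (fun i => x (Equiv.swap 0 j i)) ∂ν := by
      rw [Finset.sum_congr rfl (fun j _ => hσ (Equiv.swap 0 j)), Finset.sum_const,
        Finset.card_univ, Fintype.card_fin, nsmul_eq_mul]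
      push_cast
      ring
    have h2 : (∑ j : Fin (n + 1), ∫ x, cF n t (fun i => x (Equiv.swap 0 j i)) ∂ν)
        = ∫ x, ∑ j : Fin (n + 1), cF n t (fun i => x (Equiv.swap 0 j i)) ∂ν :=
      (integral_finset_sum _ (fun j _ => hint _)).symm
    have h3 : (∫ x, ∑ j : Fin (n + 1), cF n t (fun i => x (Equiv.swap 0 j i)) ∂ν)
        ≤ ∫ _x, ((n : ℝ) + 1) ∂ν := by
      apply integral_mono (integrable_finset_sum _ (fun j _ => hint _))
        (integrable_const _)
      intro x
      exact key_pointwise n t x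
    rw [h1, h2]
    calc (∫ x, ∑ j : Fin (n + 1), cF n t (fun i => x (Equiv.swap 0 j i)) ∂ν)
        ≤ ∫ _x, ((n : ℝ) + 1) ∂ν := h3
      _ = (n : ℝ) + 1 := by simp
  rw [hIμ]
  have hpos : (0 : ℝ) < (n : ℝ) + 1 := by positivity
  nlinarith
end

section
/- Fix real scores s_1, ..., s_m (test) and r_1, ..., r_n (calibration null scores), a level α ∈ (0,1), and θ̂ > 0. Define conformal p-values p_j = (1 + #{i : r_i ≥ s_j})/(1 + n). Run the step-up procedure: l̂ = max{l : p_(l) ≤ lα/(θ̂ m)}, with threshold T = p_(l̂) (T = 0 if no such l), rejecting R_p = {j : p_j ≤ T}. Separately, define t̂ = min{t ∈ {s_1,...,s_m} ∪ {r_1,...,r_n} : (m/(1+n)) · (1 + #{i : r_i ≥ t}) / #{j : s_j ≥ t} ≤ α/θ̂} (if it exists), e-values e_j = ((1+n)/θ̂) · 1{s_j ≥ t̂} / (1 + #{i : r_i ≥ t̂}), and run e-BH at level α: reject R_e = {j : e_j ≥ e_(l̂_e)} where l̂_e = max{l : e_(l) ≥ m/(lα)}. Then R_e = R_p. -/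
open Finset

open Finset

private lemma sort_le_of_card {m : ℕ} (q : Fin m → ℝ) (c : ℝ) (k : Fin m)
    (h : (k : ℕ) + 1 ≤ (univ.filter fun j => q j ≤ c).card) :
    q (Tuple.sort q k) ≤ c := by
  set σ := Tuple.sort q with hσ
  set A : Finset (Fin m) := univ.filter (fun i => q (σ i) ≤ c) with hA
  have hcard : (univ.filter fun j => q j ≤ c).card ≤ A.card := by
    apply Finset.card_le_card_of_injOn (fun j => σ.symm j)
    · intro j hj
      simp only [hA, mem_filter, mem_univ, true_and] at hj ⊢
      simpa using hj
    · intro a _ b _ hab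
      exact σ.symm.injective hab
  have hkA : (k : ℕ) + 1 ≤ A.card := le_trans h hcard
  obtain ⟨i, hiA, hki⟩ : ∃ i ∈ A, k ≤ i := by
    by_contra hcon
    push_neg at hcon
    have hsub : A.image Fin.val ⊆ Finset.range (k : ℕ) := by
      intro x hx
      simp only [mem_image] at hx
      obtain ⟨i, hiA, rfl⟩ := hx
      exact Finset.mem_range.mpr (hcon i hiA)
    have := Finset.card_le_card hsub
    rw [Finset.card_image_of_injective _ Fin.val_injective, Finset.card_range] at this
    omega
  have hmono := Tuple.monotone_sort q hki
  simp only [Function.comp] at hmono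
  have hic : q (σ i) ≤ c := by
    simp only [hA, mem_filter] at hiA; exact hiA.2
  exact le_trans hmono hic

private lemma card_sort_le {m : ℕ} (q : Fin m → ℝ) (k : Fin m) :
    (k : ℕ) + 1 ≤ (univ.filter fun j => q j ≤ q (Tuple.sort q k)).card := by
  set σ := Tuple.sort q with hσ
  have hsub : (Finset.Iic k).image σ ⊆ univ.filter fun j => q j ≤ q (σ k) := by
    intro x hx
    simp only [mem_image, Finset.mem_Iic] at hx
    obtain ⟨i, hik, rfl⟩ := hx
    simp only [mem_filter, mem_univ, true_and]
    exact Tuple.monotone_sort q hik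
  calc (k : ℕ) + 1 = (Finset.Iic k).card := (Fin.card_Iic k).symm
    _ = ((Finset.Iic k).image σ).card := (Finset.card_image_of_injective _ σ.injective).symm
    _ ≤ _ := Finset.card_le_card hsub

private lemma eBH_neg {m : ℕ} (e : Fin m → ℝ) (α : ℝ)
    (h : ¬ (Finset.univ.filter fun l : Fin m =>
      e (Tuple.sort (fun j => -(e j)) l) ≥ (m : ℝ) / (((l : ℕ) + 1) * α)).Nonempty) :
    eBHReject e α = ∅ := by
  unfold eBHReject
  exact dif_neg h

private lemma eBH_pos {m : ℕ} (e : Fin m → ℝ) (α : ℝ)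
    (h : (Finset.univ.filter fun l : Fin m =>
      e (Tuple.sort (fun j => -(e j)) l) ≥ (m : ℝ) / (((l : ℕ) + 1) * α)).Nonempty) :
    eBHReject e α = Finset.univ.filter fun j => e j ≥
      e (Tuple.sort (fun j => -(e j)) ((Finset.univ.filter fun l : Fin m =>
        e (Tuple.sort (fun j => -(e j)) l) ≥ (m : ℝ) / (((l : ℕ) + 1) * α)).max' h)) := by
  unfold eBHReject
  exact dif_pos h

/-- Equivalence of PSP and ePSP (single group): when the e-value threshold is calibrated
at the same level α used in e-BH, e-BH on the selective e-values rejects exactly the same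
set as the weighted BH procedure on the conformal p-values. -/
theorem ePSP_eq_PSP
    {m n : ℕ} (s : Fin m → ℝ) (r : Fin n → ℝ)
    (α θ : ℝ) (hα : α ∈ Set.Ioo (0 : ℝ) 1) (hθ : 0 < θ)
    (p : Fin m → ℝ)
    (hp : ∀ j, p j =
      (1 + ((Finset.univ.filter (fun i : Fin n => r i ≥ s j)).card : ℝ)) / (1 + n))
    (Rp : Finset (Fin m)) (hRp : Rp = stepUpReject p α θ)
    (cand : Finset ℝ)
    (hcand : cand = (Finset.univ.image s ∪ Finset.univ.image r).filter
      (fun t => ((m : ℝ) / (1 + n)) *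
        (1 + ((Finset.univ.filter (fun i : Fin n => r i ≥ t)).card : ℝ)) /
        (((Finset.univ.filter (fun j : Fin m => s j ≥ t)).card : ℝ)) ≤ α / θ))
    (e : Fin m → ℝ)
    (he : e = fun j => if h : cand.Nonempty then
        ((1 + (n : ℝ)) / θ) * (if s j ≥ cand.min' h then 1 else 0) /
          (1 + ((Finset.univ.filter (fun i : Fin n => r i ≥ cand.min' h)).card : ℝ))
      else 0)
    (Re : Finset (Fin m)) (hRe : Re = eBHReject e α) :
    Re = Rp := by
  obtain ⟨hα0, hα1⟩ := hα
  rcases Nat.eq_zero_or_pos m with hm0 | hm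
  · subst hm0; ext j; exact j.elim0
  have hmR : (0 : ℝ) < m := by exact_mod_cast hm
  have hn1 : (0 : ℝ) < 1 + n := by positivity
  have hθm : (0 : ℝ) < θ * m := by positivity
  -- key: a valid candidate threshold produces a stepUpIdx member at position (M t) - 1,
  -- and all j with s j ≥ t satisfy p j ≤ (M t)·α/(θm).
  have key : ∀ t : ℝ,
      0 < (Finset.univ.filter (fun j : Fin m => s j ≥ t)).card →
      ((m : ℝ) / (1 + n)) *
        (1 + ((Finset.univ.filter (fun i : Fin n => r i ≥ t)).card : ℝ)) /
        (((Finset.univ.filter (fun j : Fin m => s j ≥ t)).card : ℝ)) ≤ α / θ →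
      (∀ j : Fin m, s j ≥ t →
        p j ≤ ((Finset.univ.filter (fun j' : Fin m => s j' ≥ t)).card : ℝ) * α / (θ * m)) ∧
      ∃ l ∈ stepUpIdx p α θ,
        (l : ℕ) + 1 = (Finset.univ.filter (fun j : Fin m => s j ≥ t)).card := by
    intro t hk0 hcond
    set k := (Finset.univ.filter (fun j : Fin m => s j ≥ t)).card with hkdef
    have hkR : (0 : ℝ) < (k : ℝ) := by exact_mod_cast hk0
    rw [div_le_iff₀ hkR, div_mul_eq_mul_div, div_mul_eq_mul_div, div_le_div_iff₀ hn1 hθ] at hcond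
    -- hcond : m * (1 + Nt) * θ ≤ α * k * (1 + n)
    have hpj : ∀ j : Fin m, s j ≥ t → p j ≤ (k : ℝ) * α / (θ * m) := by
      intro j hj
      have hNle : ((Finset.univ.filter (fun i : Fin n => r i ≥ s j)).card : ℝ) ≤
          ((Finset.univ.filter (fun i : Fin n => r i ≥ t)).card : ℝ) := by
        have : (Finset.univ.filter (fun i : Fin n => r i ≥ s j)) ⊆
            (Finset.univ.filter (fun i : Fin n => r i ≥ t)) := by
          intro i hi
          simp only [mem_filter, mem_univ, true_and, ge_iff_le] at hi ⊢
          exact le_trans hj hi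
        exact_mod_cast Finset.card_le_card this
      rw [hp j, div_le_div_iff₀ hn1 hθm]
      nlinarith [mul_le_mul_of_nonneg_right hNle (le_of_lt hθm)]
    refine ⟨hpj, ?_⟩
    have hsub : (Finset.univ.filter (fun j : Fin m => s j ≥ t)) ⊆
        Finset.univ.filter (fun j : Fin m => p j ≤ (k : ℝ) * α / (θ * m)) := by
      intro j hj
      rw [mem_filter] at hj ⊢
      exact ⟨hj.1, hpj j hj.2⟩
    have hkcard : k ≤ (Finset.univ.filter
        (fun j : Fin m => p j ≤ (k : ℝ) * α / (θ * m))).card :=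
      Finset.card_le_card hsub
    have hkm' : k ≤ m := by
      have := Finset.card_filter_le (Finset.univ : Finset (Fin m)) (fun j : Fin m => s j ≥ t)
      simpa using this
    have hkm : k - 1 < m := by omega
    refine ⟨⟨k - 1, hkm⟩, ?_, ?_⟩
    · simp only [stepUpIdx, mem_filter, mem_univ, true_and]
      have hcast : ((((⟨k - 1, hkm⟩ : Fin m) : ℕ) : ℝ) + 1) = (k : ℝ) := by
        simp only [Fin.val_mk]
        exact_mod_cast congrArg (fun x : ℕ => (x : ℝ)) (by omega : (k - 1) + 1 = k)
      rw [hcast]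
      exact sort_le_of_card p _ ⟨k - 1, hkm⟩ (by simp only [Fin.val_mk]; omega)
    · simp only [Fin.val_mk]; omega
  by_cases hne : (stepUpIdx p α θ).Nonempty
  · -- main case: step-up rejects something
    set lhat := (stepUpIdx p α θ).max' hne with hlhatdef
    set L : ℕ := (lhat : ℕ) + 1 with hLdef
    have hlhatmem : lhat ∈ stepUpIdx p α θ := Finset.max'_mem _ _
    have hlhatcond : p (Tuple.sort p lhat) ≤ (L : ℝ) * α / (θ * m) := by
      have h2 := hlhatmem
      simp only [stepUpIdx, mem_filter, mem_univ, true_and] at h2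
      have : (((lhat : ℕ) : ℝ) + 1) = (L : ℝ) := by push_cast [hLdef]; ring
      rwa [this] at h2
    have hLm : L ≤ m := by have := lhat.isLt; omega
    clear_value L lhat
    have hRp' : Rp = Finset.univ.filter fun j => p j ≤ (L : ℝ) * α / (θ * m) := by
      rw [hRp]
      unfold stepUpReject
      rw [dif_pos hne, ← hlhatdef]
      ext j
      simp only [mem_filter, mem_univ, true_and]
      constructor
      · intro hj; exact le_trans hj hlhatcond
      · intro hj
        by_contra hgt
        push_neg at hgt
        have h1 : L ≤ (univ.filter fun j' => p j' ≤ p (Tuple.sort p lhat)).card := by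
          rw [hLdef]; exact card_sort_le p lhat
        have hjnot : j ∉ univ.filter fun j' => p j' ≤ p (Tuple.sort p lhat) := by
          simp only [mem_filter, mem_univ, true_and, not_le]
          exact hgt
        have hsub : insert j (univ.filter fun j' => p j' ≤ p (Tuple.sort p lhat)) ⊆
            univ.filter fun j' => p j' ≤ p j := by
          intro x hx
          rcases Finset.mem_insert.mp hx with rfl | hx
          · simp
          · simp only [mem_filter, mem_univ, true_and] at hx ⊢
            exact le_of_lt (lt_of_le_of_lt hx hgt)
        have h2 : L + 1 ≤ (univ.filter fun j' => p j' ≤ p j).card := by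
          calc L + 1 ≤ (insert j (univ.filter fun j' => p j' ≤ p (Tuple.sort p lhat))).card := by
                rw [Finset.card_insert_of_notMem hjnot]; omega
            _ ≤ _ := Finset.card_le_card hsub
        have hLm' : L < m := by
          have := Finset.card_filter_le (Finset.univ : Finset (Fin m))
            (fun j' : Fin m => p j' ≤ p j)
          simp only [card_univ, Fintype.card_fin] at this
          omega
        have hmem3 : (⟨L, hLm'⟩ : Fin m) ∈ stepUpIdx p α θ := by
          simp only [stepUpIdx, mem_filter, mem_univ, true_and, Fin.val_mk]
          have hq := sort_le_of_card p (p j) ⟨L, hLm'⟩ (by simp only [Fin.val_mk]; omega)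
          refine le_trans hq (le_trans hj ((div_le_div_iff_of_pos_right hθm).mpr
            (mul_le_mul_of_nonneg_right (by linarith) hα0.le)))
        have hle := Finset.le_max' _ _ hmem3
        rw [← hlhatdef] at hle
        have : L ≤ (lhat : ℕ) := hle
        omega
    -- Rp is nonempty and has ≥ L elements
    have hcardRp : L ≤ Rp.card := by
      rw [hRp']
      have h1 : L ≤ (univ.filter fun j' => p j' ≤ p (Tuple.sort p lhat)).card := by
        rw [hLdef]; exact card_sort_le p lhat
      refine le_trans h1 (Finset.card_le_card ?_)
      intro x hx
      simp only [mem_filter, mem_univ, true_and] at hx ⊢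
      exact le_trans hx hlhatcond
    have hRpne : Rp.Nonempty := Finset.card_pos.mp (by omega)
    have hsne : (Rp.image s).Nonempty := hRpne.image s
    set t' := (Rp.image s).min' hsne with ht'def
    obtain ⟨jst, hjstRp, hjst⟩ : ∃ j0 ∈ Rp, s j0 = t' := by
      have := Finset.min'_mem _ hsne
      rwa [Finset.mem_image] at this
    have ht'le : ∀ j ∈ Rp, t' ≤ s j := fun j hj =>
      Finset.min'_le _ _ (Finset.mem_image_of_mem s hj)
    clear_value t'
    have hRpsub : Rp ⊆ Finset.univ.filter (fun j : Fin m => s j ≥ t') := fun j hj =>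
      Finset.mem_filter.mpr ⟨mem_univ _, ht'le j hj⟩
    have hMt' : L ≤ (Finset.univ.filter (fun j : Fin m => s j ≥ t')).card :=
      le_trans hcardRp (Finset.card_le_card hRpsub)
    have hpjst : p jst ≤ (L : ℝ) * α / (θ * m) := by
      have := hjstRp
      rw [hRp', mem_filter] at this
      exact this.2
    have ht'cand : t' ∈ cand := by
      rw [hcand, Finset.mem_filter]
      constructor
      · exact Finset.mem_union_left _ (Finset.mem_image.mpr ⟨jst, mem_univ _, hjst⟩)
      · have hMpos : (0 : ℝ) <
            ((Finset.univ.filter (fun j : Fin m => s j ≥ t')).card : ℝ) := by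
          have : 0 < (Finset.univ.filter (fun j : Fin m => s j ≥ t')).card := by omega
          exact_mod_cast this
        rw [div_le_iff₀ hMpos, div_mul_eq_mul_div, div_mul_eq_mul_div, div_le_div_iff₀ hn1 hθ]
        -- goal : m * (1 + Nt') * θ ≤ α * M * (1 + n)
        have hpj2 : (1 + ((Finset.univ.filter (fun i : Fin n => r i ≥ t')).card : ℝ)) *
            (θ * m) ≤ (L : ℝ) * α * (1 + n) := by
          have h3 := hpjst
          rw [hp jst, hjst, div_le_div_iff₀ hn1 hθm] at h3
          exact h3
        have hLM : (L : ℝ) ≤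
            ((Finset.univ.filter (fun j : Fin m => s j ≥ t')).card : ℝ) := by
          exact_mod_cast hMt'
        nlinarith [mul_le_mul_of_nonneg_right hLM (le_of_lt (mul_pos hα0 hn1))]
    have hcne : cand.Nonempty := ⟨t', ht'cand⟩
    set tHat := cand.min' hcne with htHatdef
    have htle : tHat ≤ t' := Finset.min'_le _ _ ht'cand
    have htmemc : tHat ∈ cand := Finset.min'_mem _ _
    have htcond : ((m : ℝ) / (1 + n)) *
        (1 + ((Finset.univ.filter (fun i : Fin n => r i ≥ tHat)).card : ℝ)) /
        (((Finset.univ.filter (fun j : Fin m => s j ≥ tHat)).card : ℝ)) ≤ α / θ := by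
      have := htmemc
      rw [hcand, Finset.mem_filter] at this
      exact this.2
    clear_value tHat
    set k := (Finset.univ.filter (fun j : Fin m => s j ≥ tHat)).card with hkdef
    clear_value k
    have hkM : (Finset.univ.filter (fun j : Fin m => s j ≥ t')).card ≤ k := by
      rw [hkdef]
      apply Finset.card_le_card
      intro j hj
      simp only [mem_filter, mem_univ, true_and, ge_iff_le] at hj ⊢
      exact le_trans htle hj
    have hk0 : 0 < k := by omega
    obtain ⟨hpS, l0, hl0mem, hl0⟩ := key tHat
      (by rw [← hkdef]; exact hk0) (by rw [← hkdef]; exact htcond)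
    rw [← hkdef] at hpS hl0
    have hkL : k ≤ L := by
      have hle := Finset.le_max' _ _ hl0mem
      rw [← hlhatdef] at hle
      have : (l0 : ℕ) ≤ (lhat : ℕ) := hle
      omega
    -- S = Rp
    have hSRp : (Finset.univ.filter (fun j : Fin m => s j ≥ tHat)) = Rp := by
      rw [hRp']
      ext j
      simp only [mem_filter, mem_univ, true_and]
      constructor
      · intro hj
        refine le_trans (hpS j hj) ((div_le_div_iff_of_pos_right hθm).mpr
          (mul_le_mul_of_nonneg_right (by exact_mod_cast hkL) hα0.le))
      · intro hj
        have hjRp : j ∈ Rp := by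
          rw [hRp', mem_filter]; exact ⟨mem_univ _, hj⟩
        exact le_trans htle (ht'le j hjRp)
    -- now the e-side
    set NH := ((Finset.univ.filter (fun i : Fin n => r i ≥ tHat)).card : ℝ) with hNH
    have hNH0 : (0 : ℝ) ≤ NH := by rw [hNH]; positivity
    clear_value NH
    set c : ℝ := ((1 + (n : ℝ)) / θ) / (1 + NH) with hcdef
    clear_value c
    have hc0 : 0 < c := by
      rw [hcdef]
      apply div_pos (div_pos hn1 hθ)
      linarith
    have heval : ∀ j, e j = if s j ≥ tHat then c else 0 := by
      intro j
      rw [he]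
      simp only [dif_pos hcne, ← htHatdef, ← hNH]
      by_cases hj : s j ≥ tHat
      · rw [if_pos hj, if_pos hj, mul_one, hcdef]
      · rw [if_neg hj, if_neg hj, mul_zero, zero_div]
    have heS : ∀ j, (e j ≥ c ↔ s j ≥ tHat) := by
      intro j
      rw [heval j]
      by_cases hj : s j ≥ tHat
      · simp [hj]
      · simp only [if_neg hj, ge_iff_le, hj, iff_false, not_le]
        exact hc0
    -- c ≥ m / (k α)
    have hkR : (0 : ℝ) < (k : ℝ) := by exact_mod_cast hk0
    have hNH1 : (0 : ℝ) < 1 + NH := by linarith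
    have hcbound : (m : ℝ) / ((k : ℝ) * α) ≤ c := by
      have h4 : (m : ℝ) * (1 + NH) * θ ≤ α * (k : ℝ) * (1 + n) := by
        have h5 := htcond
        rw [div_le_iff₀ hkR, div_mul_eq_mul_div, div_mul_eq_mul_div,
          div_le_div_iff₀ hn1 hθ] at h5
        linarith
      rw [hcdef, div_div, div_le_div_iff₀ (mul_pos hkR hα0) (mul_pos hθ hNH1)]
      linarith
    -- the e-BH filter is nonempty: k-1 is in it
    have hkm2 : k - 1 < m := by omega
    have hdesc_k : e (Tuple.sort (fun j => -(e j)) ⟨k - 1, hkm2⟩) ≥ c := by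
      have hcardS : (Finset.univ.filter (fun j : Fin m => -(e j) ≤ -c)).card = k := by
        rw [hkdef]
        congr 1
        apply Finset.filter_congr
        intro j _
        simp only [neg_le_neg_iff]
        exact heS j
      have h6 := sort_le_of_card (fun j => -(e j)) (-c) ⟨k - 1, hkm2⟩
        (by rw [hcardS]; simp only [Fin.val_mk]; omega)
      replace h6 : -(e (Tuple.sort (fun j => -(e j)) ⟨k - 1, hkm2⟩)) ≤ -c := h6
      linarith
    have hFk : (⟨k - 1, hkm2⟩ : Fin m) ∈ (Finset.univ.filter fun l : Fin m =>
        e (Tuple.sort (fun j => -(e j)) l) ≥ (m : ℝ) / (((l : ℕ) + 1) * α)) := by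
      simp only [mem_filter, mem_univ, true_and, Fin.val_mk]
      have hcast : (((k - 1 : ℕ) : ℝ) + 1) = (k : ℝ) := by
        exact_mod_cast congrArg (fun x : ℕ => (x : ℝ)) (by omega : (k - 1) + 1 = k)
      rw [hcast]
      exact le_trans hcbound hdesc_k
    have hF : (Finset.univ.filter fun l : Fin m =>
        e (Tuple.sort (fun j => -(e j)) l) ≥ (m : ℝ) / (((l : ℕ) + 1) * α)).Nonempty :=
      ⟨_, hFk⟩
    rw [hRe, eBH_pos e α hF]
    set Le := (Finset.univ.filter fun l : Fin m =>
        e (Tuple.sort (fun j => -(e j)) l) ≥ (m : ℝ) / (((l : ℕ) + 1) * α)).max' hF with hLedef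
    have hLemem := Finset.max'_mem (Finset.univ.filter fun l : Fin m =>
        e (Tuple.sort (fun j => -(e j)) l) ≥ (m : ℝ) / (((l : ℕ) + 1) * α)) hF
    rw [← hLedef, mem_filter] at hLemem
    clear_value Le
    have hLecond := hLemem.2
    have hpos : (0 : ℝ) < (m : ℝ) / (((Le : ℕ) : ℝ) + 1) / α := by positivity
    have heLe : e (Tuple.sort (fun j => -(e j)) Le) = c := by
      rw [heval]
      by_cases hj : s (Tuple.sort (fun j => -(e j)) Le) ≥ tHat
      · rw [if_pos hj]
      · exfalso
        rw [heval, if_neg hj] at hLecond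
        have : (0 : ℝ) < (m : ℝ) / ((((Le : ℕ) : ℝ) + 1) * α) := by positivity
        linarith
    rw [heLe, ← hSRp]
    ext j
    simp only [mem_filter, mem_univ, true_and]
    exact heS j
  · -- step-up rejects nothing: show e-BH also rejects nothing
    have hRpempty : Rp = ∅ := by
      rw [hRp]; unfold stepUpReject; exact dif_neg hne
    have he0 : ∀ j, e j = 0 := by
      intro j
      rw [he]
      by_cases hc : cand.Nonempty
      · simp only [dif_pos hc]
        set tHat := cand.min' hc with htHatdef
        have htmemc : tHat ∈ cand := Finset.min'_mem _ _
        have htcond : ((m : ℝ) / (1 + n)) *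
            (1 + ((Finset.univ.filter (fun i : Fin n => r i ≥ tHat)).card : ℝ)) /
            (((Finset.univ.filter (fun j : Fin m => s j ≥ tHat)).card : ℝ)) ≤ α / θ := by
          have := htmemc
          rw [hcand, Finset.mem_filter] at this
          exact this.2
        by_cases hM : 0 < (Finset.univ.filter (fun j' : Fin m => s j' ≥ tHat)).card
        · exfalso
          obtain ⟨-, l0, hl0mem, -⟩ := key tHat hM htcond
          exact hne ⟨l0, hl0mem⟩
        · have hjnot : ¬ s j ≥ tHat := by
            intro hj
            apply hM
            apply Finset.card_pos.mpr
            exact ⟨j, Finset.mem_filter.mpr ⟨mem_univ _, hj⟩⟩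
          rw [if_neg hjnot, mul_zero, zero_div]
      · simp only [dif_neg hc]
    have hFempty : ¬ (Finset.univ.filter fun l : Fin m =>
        e (Tuple.sort (fun j => -(e j)) l) ≥ (m : ℝ) / (((l : ℕ) + 1) * α)).Nonempty := by
      rw [Finset.not_nonempty_iff_eq_empty, Finset.filter_eq_empty_iff]
      intro l _
      rw [he0]
      simp only [ge_iff_le, not_le]
      positivity
    rw [hRe, eBH_neg e α hFempty, hRpempty]
end

section
/- In the setting of the previous equivalence, for any calibration level α' ∈ (0,1) used to define the e-value threshold t̂ (via (m/(1+n)) · (1 + #{i : r_i ≥ t})/#{j : s_j ≥ t} ≤ α'/θ̂) while e-BH is run at level α, the number of e-BH rejections never exceeds the number of weighted-BH rejections: |R_e| ≤ |R_p|. -/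
open Finset

open Finset

section Aux

open Finset

lemma card_filter_perm_aux {m : ℕ} (σ : Equiv.Perm (Fin m)) (Q : Fin m → Prop)
    [DecidablePred Q] :
    (univ.filter fun l => Q (σ l)).card = (univ.filter Q).card := by
  apply Finset.card_bij (fun l _ => σ l)
  · intro a ha; simp only [mem_filter, mem_univ, true_and] at ha ⊢; exact ha
  · intro a _ b _ h; exact σ.injective h
  · intro b hb
    simp only [mem_filter, mem_univ, true_and] at hb
    exact ⟨σ.symm b, by simp [hb], by simp⟩

end Aux

/-- ePSP never rejects more than PSP: for any calibration level α' used to set the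
e-value threshold, e-BH at level α rejects at most as many subjects as the weighted
BH procedure on the conformal p-values at level α. -/
theorem ePSP_card_le_PSP
    {m n : ℕ} (s : Fin m → ℝ) (r : Fin n → ℝ)
    (α α' θ : ℝ) (hα : α ∈ Set.Ioo (0 : ℝ) 1) (hα' : α' ∈ Set.Ioo (0 : ℝ) 1) (hθ : 0 < θ)
    (p : Fin m → ℝ)
    (hp : ∀ j, p j =
      (1 + ((Finset.univ.filter (fun i : Fin n => r i ≥ s j)).card : ℝ)) / (1 + n))
    (Rp : Finset (Fin m)) (hRp : Rp = stepUpReject p α θ)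
    (cand : Finset ℝ)
    (hcand : cand = (Finset.univ.image s ∪ Finset.univ.image r).filter
      (fun t => ((m : ℝ) / (1 + n)) *
        (1 + ((Finset.univ.filter (fun i : Fin n => r i ≥ t)).card : ℝ)) /
        (((Finset.univ.filter (fun j : Fin m => s j ≥ t)).card : ℝ)) ≤ α' / θ))
    (e : Fin m → ℝ)
    (he : e = fun j => if h : cand.Nonempty then
        ((1 + (n : ℝ)) / θ) * (if s j ≥ cand.min' h then 1 else 0) /
          (1 + ((Finset.univ.filter (fun i : Fin n => r i ≥ cand.min' h)).card : ℝ))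
      else 0)
    (Re : Finset (Fin m)) (hRe : Re = eBHReject e α) :
    Re.card ≤ Rp.card := by
  obtain ⟨hα0, hα1⟩ := hα
  rcases Nat.eq_zero_or_pos m with hm | hm
  · subst hm
    have h1 : Re.card ≤ (univ : Finset (Fin 0)).card := card_le_card (subset_univ Re)
    simp only [Finset.card_univ, Fintype.card_fin] at h1
    omega
  have hmR : (0:ℝ) < m := by exact_mod_cast hm
  have hn1 : (0:ℝ) < 1 + n := by positivity
  by_cases hc : cand.Nonempty
  swap
  · have he0 : e = fun _ => (0:ℝ) := by
      funext j; rw [he]; simp [hc]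
    have hRee : Re = ∅ := by
      rw [hRe]
      simp only [eBHReject]
      have hemp : ¬ (Finset.univ.filter fun l : Fin m =>
          e (Tuple.sort (fun j => -(e j)) l) ≥ (m : ℝ) / (((l : ℕ) + 1) * α)).Nonempty := by
        rw [Finset.not_nonempty_iff_eq_empty, Finset.filter_eq_empty_iff]
        intro l _
        have hpos : (0:ℝ) < (m : ℝ) / (((l : ℕ) + 1) * α) := by positivity
        rw [he0]
        simpa using hpos
      rw [dif_neg hemp]
    simp [hRee]
  set t : ℝ := cand.min' hc with ht
  set K : ℝ := 1 + ((Finset.univ.filter (fun i : Fin n => r i ≥ t)).card : ℝ) with hKdef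
  have hKpos : (0:ℝ) < K := by rw [hKdef]; positivity
  set S : Finset (Fin m) := Finset.univ.filter (fun j : Fin m => s j ≥ t) with hSdef
  set M : ℕ := S.card with hMdef
  set C : ℝ := ((1 + (n : ℝ)) / θ) * 1 / K with hCdef
  have hCpos : (0:ℝ) < C := by
    rw [hCdef]
    have : (0:ℝ) < (1 + (n : ℝ)) / θ := div_pos hn1 hθ
    positivity
  have heval : ∀ j, e j = if s j ≥ t then C else 0 := by
    intro j
    rw [he]
    simp only [dif_pos hc, ← ht]
    by_cases hj : s j ≥ t
    · rw [if_pos hj, if_pos hj, hCdef, hKdef]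
    · rw [if_neg hj, if_neg hj]
      ring
  have hRe' : Re = eBHReject e α := hRe
  simp only [eBHReject] at hRe'
  set desc : Equiv.Perm (Fin m) := Tuple.sort (fun j => -(e j)) with hdesc
  set F : Finset (Fin m) := Finset.univ.filter fun l : Fin m =>
      e (desc l) ≥ (m : ℝ) / (((l : ℕ) + 1) * α) with hFdef
  by_cases hFne : F.Nonempty
  swap
  · rw [dif_neg hFne] at hRe'
    simp [hRe']
  rw [dif_pos hFne] at hRe'
  set lhat : Fin m := F.max' hFne with hlhatdef
  have hlhatF : lhat ∈ F := F.max'_mem hFne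
  have hlhate : e (desc lhat) ≥ (m : ℝ) / (((lhat : ℕ) + 1) * α) := by
    rw [hFdef, Finset.mem_filter] at hlhatF
    exact hlhatF.2
  have hthrpos : (0:ℝ) < (m : ℝ) / (((lhat : ℕ) + 1) * α) := by positivity
  have hlhatpos : 0 < e (desc lhat) := lt_of_lt_of_le hthrpos hlhate
  have hsdesclhat : s (desc lhat) ≥ t := by
    by_contra hcon
    rw [heval, if_neg hcon] at hlhatpos
    exact lt_irrefl _ hlhatpos
  have helhatC : e (desc lhat) = C := by rw [heval, if_pos hsdesclhat]
  have hReS : Re = S := by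
    rw [hRe', hSdef]
    ext j
    simp only [Finset.mem_filter, Finset.mem_univ, true_and]
    rw [helhatC]
    constructor
    · intro hj
      by_contra hcon
      rw [heval, if_neg hcon] at hj
      exact absurd (lt_of_lt_of_le hCpos hj) (lt_irrefl 0)
    · intro hj
      rw [heval, if_pos hj]
  have hl1M : (lhat : ℕ) + 1 ≤ M := by
    have hsub : (Finset.Iic lhat).image desc ⊆ S := by
      intro j hj
      rw [Finset.mem_image] at hj
      obtain ⟨l, hl, rfl⟩ := hj
      rw [Finset.mem_Iic] at hl
      have hmono : -(e (desc l)) ≤ -(e (desc lhat)) :=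
        Tuple.monotone_sort (fun j => -(e j)) hl
      have hge : C ≤ e (desc l) := by rw [← helhatC]; linarith
      rw [hSdef, Finset.mem_filter]
      refine ⟨Finset.mem_univ _, ?_⟩
      by_contra hcon
      rw [heval, if_neg hcon] at hge
      exact absurd (lt_of_le_of_lt hge hCpos) (lt_irrefl _)
    calc (lhat : ℕ) + 1 = (Finset.Iic lhat).card := (Fin.card_Iic lhat).symm
      _ = ((Finset.Iic lhat).image desc).card :=
          (Finset.card_image_of_injective _ desc.injective).symm
      _ ≤ S.card := Finset.card_le_card hsub
      _ = M := rfl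
  have hM1 : 1 ≤ M := le_trans (Nat.le_add_left 1 _) hl1M
  have hMm : M ≤ m := by
    have : S.card ≤ (univ : Finset (Fin m)).card := card_le_card (subset_univ S)
    simpa using this
  have hpS : ∀ j ∈ S, p j ≤ K / (1 + n) := by
    intro j hj
    rw [hSdef, Finset.mem_filter] at hj
    rw [hp j, hKdef]
    have hsub : (Finset.univ.filter (fun i : Fin n => r i ≥ s j)) ⊆
        (Finset.univ.filter (fun i : Fin n => r i ≥ t)) := by
      intro i hi
      rw [Finset.mem_filter] at hi ⊢
      exact ⟨hi.1, le_trans hj.2 hi.2⟩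
    have hcard : ((Finset.univ.filter (fun i : Fin n => r i ≥ s j)).card : ℝ) ≤
        ((Finset.univ.filter (fun i : Fin n => r i ≥ t)).card : ℝ) := by
      exact_mod_cast Finset.card_le_card hsub
    gcongr
  have haM : M - 1 < m := by omega
  set a : Fin m := ⟨M - 1, haM⟩ with hadef
  have hav : (a : ℕ) = M - 1 := rfl
  have haval : (a : ℕ) + 1 = M := by omega
  have hpa : p (Tuple.sort p a) ≤ K / (1 + n) := by
    by_contra hgt
    push_neg at hgt
    set A : Finset (Fin m) :=
      Finset.univ.filter (fun l => p (Tuple.sort p l) ≤ K / (1 + n)) with hAdef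
    have hAsub : A ⊆ Finset.Iio a := by
      intro l hl
      rw [hAdef, Finset.mem_filter] at hl
      rw [Finset.mem_Iio]
      by_contra hcon
      push_neg at hcon
      have hmono : p (Tuple.sort p a) ≤ p (Tuple.sort p l) := Tuple.monotone_sort p hcon
      linarith [hl.2]
    have hcard1 : A.card ≤ M - 1 := by
      have h := Finset.card_le_card hAsub
      rwa [Fin.card_Iio] at h
    have hcard2 : M ≤ A.card := by
      rw [hAdef, card_filter_perm_aux (Tuple.sort p) (fun j => p j ≤ K / (1 + n))]
      have hsub2 : S ⊆ Finset.univ.filter (fun j => p j ≤ K / (1 + n)) := by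
        intro j hj
        rw [Finset.mem_filter]
        exact ⟨Finset.mem_univ j, hpS j hj⟩
      exact le_trans (le_of_eq hMdef) (Finset.card_le_card hsub2)
    omega
  have hkey : K / (1 + n) ≤ ((((lhat : ℕ) : ℝ)) + 1) * α / (θ * m) := by
    have h1 : (m : ℝ) / ((((lhat : ℕ) : ℝ) + 1) * α) ≤ ((1 + (n : ℝ)) / θ) * 1 / K := by
      rw [← hCdef, ← helhatC]
      exact hlhate
    rw [div_le_div_iff₀ (by positivity) hKpos] at h1
    rw [div_le_div_iff₀ hn1 (by positivity)]
    have h4 := mul_le_mul_of_nonneg_right h1 hθ.le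
    have h5 : ((1 + (n : ℝ)) / θ * 1) * ((((lhat : ℕ) : ℝ) + 1) * α) * θ
        = (1 + (n : ℝ)) * ((((lhat : ℕ) : ℝ) + 1) * α) := by
      field_simp
    rw [h5] at h4
    nlinarith [h4]
  have hkey2 : ((((lhat : ℕ) : ℝ)) + 1) * α / (θ * m) ≤ (M : ℝ) * α / (θ * m) := by
    have hlM : (((lhat : ℕ) : ℝ)) + 1 ≤ (M : ℝ) := by exact_mod_cast hl1M
    gcongr
  have hamem : a ∈ stepUpIdx p α θ := by
    unfold stepUpIdx
    rw [Finset.mem_filter]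
    refine ⟨Finset.mem_univ _, ?_⟩
    have hcast : ((a : ℕ) : ℝ) + 1 = (M : ℝ) := by exact_mod_cast haval
    rw [hcast]
    exact le_trans hpa (le_trans hkey hkey2)
  have hne : (stepUpIdx p α θ).Nonempty := ⟨a, hamem⟩
  have hal' : a ≤ (stepUpIdx p α θ).max' hne := Finset.le_max' _ a hamem
  have hRp' : Rp = Finset.univ.filter
      fun j => p j ≤ p (Tuple.sort p ((stepUpIdx p α θ).max' hne)) := by
    rw [hRp]
    unfold stepUpReject
    rw [dif_pos hne]
  have hsubRp : (Finset.Iic ((stepUpIdx p α θ).max' hne)).image (Tuple.sort p) ⊆ Rp := by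
    intro j hj
    rw [Finset.mem_image] at hj
    obtain ⟨l, hl, rfl⟩ := hj
    rw [Finset.mem_Iic] at hl
    rw [hRp', Finset.mem_filter]
    exact ⟨Finset.mem_univ _, Tuple.monotone_sort p hl⟩
  have hfin : ((stepUpIdx p α θ).max' hne : ℕ) + 1 ≤ Rp.card := by
    calc ((stepUpIdx p α θ).max' hne : ℕ) + 1
        = (Finset.Iic ((stepUpIdx p α θ).max' hne)).card := (Fin.card_Iic _).symm
      _ = ((Finset.Iic ((stepUpIdx p α θ).max' hne)).image (Tuple.sort p)).card :=
          (Finset.card_image_of_injective _ (Tuple.sort p).injective).symm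
      _ ≤ Rp.card := Finset.card_le_card hsubRp
  have haval2 : (a : ℕ) ≤ ((stepUpIdx p α θ).max' hne : ℕ) := hal'
  rw [hReS, ← hMdef]
  omega
end

section
/- Let p_1, ..., p_m be independent random variables, let N ⊆ {1,...,m} with |N| = m_0 be such that p_j is super-uniform (P(p_j ≤ t) ≤ t for all t ∈ [0,1]) for every j ∈ N. Fix α ∈ (0,1) and run the Benjamini–Hochberg step-up procedure at level α: l̂ = max{l : p_(l) ≤ lα/m}, rejecting R = {j : p_j ≤ p_(l̂)} (R = ∅ if l̂ does not exist). Then the false discovery rate satisfies E[ #(R ∩ N)/max(1, |R|) ] ≤ α·m_0/m. -/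
open MeasureTheory ProbabilityTheory

open Finset

/-!
Let `K` be the number of BH rejections and `K_j` the number obtained after setting `p_j` to `0`.
Whenever `p_j` is rejected, `K = K_j`, so the false discovery proportion equals
`∑_{j ∈ N} 1{p_j ≤ α K_j / m} / K_j`. As `K_j` is a function of the other p-values, it is
independent of `p_j`, and conditioning on `K_j = k` together with super-uniformity bounds each
summand's expectation by `(α k / m) / k = α / m`.
-/

lemma Finset.card_inter_div_max_one_card {ι : Type*} [DecidableEq ι] (R N : Finset ι) :
    (#(R ∩ N) : ℝ) / max 1 (#R : ℝ) = ∑ j ∈ N, if j ∈ R then (#R : ℝ)⁻¹ else 0 := by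
  rw [sum_ite_mem, sum_const, nsmul_eq_mul, inter_comm N R]
  rcases R.eq_empty_or_nonempty with rfl | hR
  · simp
  · rw [max_eq_right (by exact_mod_cast hR.card_pos), div_eq_mul_inv]

section Probability

variable {Ω : Type*} [MeasurableSpace Ω] {μ : Measure Ω}

lemma ProbabilityTheory.iIndepFun.indepFun_comp_update {ι E β : Type*} [Fintype ι]
    [DecidableEq ι] [MeasurableSpace E] [MeasurableSpace β] {f : ι → Ω → E}
    (hf : iIndepFun f μ) (hmeas : ∀ i, Measurable (f i)) (j : ι) (a : E)
    {φ : (ι → E) → β} (hφ : Measurable φ) :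
    IndepFun (f j) (fun ω => φ (Function.update (fun i => f i ω) j a)) μ := by
  let extend : ((({j}ᶜ : Finset ι)) → E) → ι → E :=
    fun w i => if h : i ∈ ({j}ᶜ : Finset ι) then w ⟨i, h⟩ else a
  have hextend : Measurable extend := measurable_pi_lambda _ fun i => by
    by_cases h : i ∈ ({j}ᶜ : Finset ι)
    · simpa only [extend, dif_pos h] using measurable_pi_apply _
    · simpa only [extend, dif_neg h] using measurable_const
  have hupdate : (fun ω => φ (Function.update (fun i => f i ω) j a)) =
      (φ ∘ extend) ∘ fun ω (i : ({j}ᶜ : Finset ι)) => f i ω := by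
    funext ω
    congr 1
    funext i
    by_cases hij : i = j
    · subst hij; simp [extend]
    · simp [extend, hij]
  rw [hupdate]
  exact (hf.indepFun_finset {j} {j}ᶜ disjoint_compl_right hmeas).comp
    (measurable_pi_apply ⟨j, mem_singleton_self j⟩) (hφ.comp hextend)

lemma integrable_ite_le_mul_inv [IsFiniteMeasure μ] {X : Ω → ℝ} {Y : Ω → ℕ}
    (hX : Measurable X) (hY : Measurable Y) (c : ℝ) :
    Integrable (fun ω => if X ω ≤ c * Y ω then (Y ω : ℝ)⁻¹ else 0) μ := by
  have hYinv : Measurable fun ω => (Y ω : ℝ)⁻¹ :=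
    (measurable_from_nat (f := fun k : ℕ => (k : ℝ)⁻¹)).comp hY
  refine Integrable.of_bound (Measurable.ite ?_ hYinv measurable_const).aestronglyMeasurable 1
    (ae_of_all _ fun ω => ?_)
  · exact measurableSet_le hX (measurable_const.mul ((measurable_from_nat (f := Nat.cast)).comp hY))
  · split_ifs
    · rw [Real.norm_of_nonneg (by positivity)]
      exact Nat.cast_inv_le_one _
    · simp

/-- The self-consistency lemma of Blanchard and Roquain, for a bounded integer `Y`. -/
lemma integral_ite_le_mul_inv_le [IsProbabilityMeasure μ] {X : Ω → ℝ} {Y : Ω → ℕ}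
    (hX : Measurable X) (hY : Measurable Y) (hXY : IndepFun X Y μ) {c : ℝ} (hc : 0 ≤ c)
    {n : ℕ} (hYn : ∀ ω, Y ω ≤ n)
    (hX_le : ∀ k ∈ Icc 1 n, μ {ω | X ω ≤ c * k} ≤ ENNReal.ofReal (c * k)) :
    ∫ ω, (if X ω ≤ c * Y ω then (Y ω : ℝ)⁻¹ else 0) ∂μ ≤ c := by
  let A : ℕ → Set Ω := fun k => {ω | X ω ≤ c * k} ∩ Y ⁻¹' {k}
  have hA : ∀ k, MeasurableSet (A k) := fun k =>
    (measurableSet_le hX measurable_const).inter (hY (measurableSet_singleton k))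
  have hsplit : (fun ω => if X ω ≤ c * Y ω then (Y ω : ℝ)⁻¹ else 0) =
      fun ω => ∑ k ∈ range (n + 1), (k : ℝ)⁻¹ * (A k).indicator 1 ω := by
    funext ω
    rw [sum_eq_single_of_mem (Y ω) (mem_range.2 (Nat.lt_succ_of_le (hYn ω)))]
    · by_cases h : X ω ≤ c * Y ω <;> simp [A, h]
    · intro k _ hk
      simp [A, Ne.symm hk]
  have hterm : ∀ k ∈ range (n + 1), (k : ℝ)⁻¹ * μ.real (A k) ≤ c * μ.real (Y ⁻¹' {k}) := by
    intro k hk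
    have hAk : μ (A k) = μ {ω | X ω ≤ c * k} * μ (Y ⁻¹' {k}) :=
      hXY.measure_inter_preimage_eq_mul _ _ measurableSet_Iic (measurableSet_singleton k)
    rw [measureReal_def, hAk, ENNReal.toReal_mul, ← measureReal_def, ← measureReal_def]
    rcases Nat.eq_zero_or_pos k with rfl | hk0
    · simp only [Nat.cast_zero, inv_zero, zero_mul]
      positivity
    have hXk : μ.real {ω | X ω ≤ c * k} ≤ c * k := ENNReal.toReal_le_of_le_ofReal
      (by positivity) (hX_le k (mem_Icc.2 ⟨hk0, Nat.lt_succ_iff.1 (mem_range.1 hk)⟩))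
    have hk0' : (0 : ℝ) < k := by exact_mod_cast hk0
    calc (k : ℝ)⁻¹ * (μ.real {ω | X ω ≤ c * k} * μ.real (Y ⁻¹' {k}))
        ≤ (k : ℝ)⁻¹ * (c * k * μ.real (Y ⁻¹' {k})) := by gcongr
      _ = c * μ.real (Y ⁻¹' {k}) := by field_simp
  have htotal : ∑ k ∈ range (n + 1), μ.real (Y ⁻¹' {k}) ≤ 1 := by
    rw [sum_measureReal_preimage_singleton _ fun k _ => hY (measurableSet_singleton k)]
    exact measureReal_le_one
  calc ∫ ω, (if X ω ≤ c * Y ω then (Y ω : ℝ)⁻¹ else 0) ∂μ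
      = ∑ k ∈ range (n + 1), (k : ℝ)⁻¹ * μ.real (A k) := by
        rw [hsplit, integral_finsetSum _ fun k _ =>
          ((integrable_const 1).indicator (hA k)).const_mul _]
        simp only [integral_const_mul, integral_indicator_one (hA _)]
    _ ≤ ∑ k ∈ range (n + 1), c * μ.real (Y ⁻¹' {k}) := sum_le_sum hterm
    _ ≤ c := by rw [← mul_sum]; exact mul_le_of_le_one_right hc htotal

end Probability

namespace BH

variable {m : ℕ}

noncomputable def countLE (p : Fin m → ℝ) (t : ℝ) : ℕ := #{j | p j ≤ t}

/-- The number of rejections of the linear step-up procedure with critical values `c * k`. -/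
noncomputable def bhCount (p : Fin m → ℝ) (c : ℝ) : ℕ :=
  Nat.findGreatest (fun k => k ≤ countLE p (c * k)) m

variable {p q : Fin m → ℝ} {c : ℝ}

lemma countLE_le (p : Fin m → ℝ) (t : ℝ) : countLE p t ≤ m :=
  (card_le_univ _).trans_eq (Fintype.card_fin m)

lemma countLE_mono (p : Fin m → ℝ) : Monotone (countLE p) := fun _ _ hst =>
  card_le_card fun _ hj => by simp only [mem_filter, mem_univ, true_and] at hj ⊢; exact hj.trans hst

lemma sort_le_iff_lt_countLE (p : Fin m → ℝ) (t : ℝ) (l : Fin m) :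
    p (Tuple.sort p l) ≤ t ↔ (l : ℕ) < countLE p t := by
  refine (Tuple.lt_card_le_iff_apply_le_of_monotone (Tuple.monotone_sort p)).symm.trans ?_
  exact Iff.of_eq (congrArg _ (card_equiv (Tuple.sort p) (by simp)))

lemma bhCount_le (p : Fin m → ℝ) (c : ℝ) : bhCount p c ≤ m := Nat.findGreatest_le m

lemma bhCount_le_countLE (p : Fin m → ℝ) (c : ℝ) :
    bhCount p c ≤ countLE p (c * bhCount p c) :=
  Nat.findGreatest_spec (P := fun k => k ≤ countLE p (c * k)) (Nat.zero_le m) (Nat.zero_le _)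

lemma le_bhCount {k : ℕ} (hkm : k ≤ m) (hk : k ≤ countLE p (c * k)) : k ≤ bhCount p c :=
  Nat.le_findGreatest hkm hk

lemma countLE_bhCount (hc : 0 ≤ c) : countLE p (c * bhCount p c) = bhCount p c := by
  set K := bhCount p c
  refine le_antisymm ?_ (bhCount_le_countLE p c)
  by_contra! hK
  have hK1 : K + 1 ≤ countLE p (c * ↑(K + 1)) :=
    hK.trans_le (countLE_mono p (by push_cast; gcongr; linarith))
  have := le_bhCount (hK1.trans (countLE_le p _)) hK1
  omega

lemma mem_stepUpIdx_iff (α : ℝ) (l : Fin m) :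
    l ∈ stepUpIdx p α 1 ↔ (l : ℕ) + 1 ≤ countLE p (α / m * ↑((l : ℕ) + 1)) := by
  have hcrit : ((l : ℕ) + 1 : ℝ) * α / (1 * m) = α / m * ↑((l : ℕ) + 1) := by push_cast; ring
  rw [stepUpIdx, mem_filter, hcrit, sort_le_iff_lt_countLE]
  simp only [mem_univ, true_and, Nat.lt_iff_add_one_le]

lemma pred_mem_stepUpIdx {α : ℝ} {n : ℕ} (hn : 0 < n) (hnm : n ≤ m)
    (hP : n ≤ countLE p (α / m * n)) : (⟨n - 1, by omega⟩ : Fin m) ∈ stepUpIdx p α 1 := by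
  rw [mem_stepUpIdx_iff, Nat.sub_add_cancel hn]
  exact hP

lemma bhCount_eq_max'_add_one {α : ℝ} (h : (stepUpIdx p α 1).Nonempty) :
    bhCount p (α / m) = ((stepUpIdx p α 1).max' h : ℕ) + 1 := by
  set l := (stepUpIdx p α 1).max' h
  refine Nat.findGreatest_eq_iff.2 ⟨l.isLt, fun _ => (mem_stepUpIdx_iff α l).1 (max'_mem _ h),
    fun n hln hnm hP => ?_⟩
  have : n - 1 ≤ (l : ℕ) := Fin.le_def.1 (le_max' _ _ (pred_mem_stepUpIdx (by omega) hnm hP))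
  omega

lemma bhCount_eq_zero {α : ℝ} (h : ¬(stepUpIdx p α 1).Nonempty) : bhCount p (α / m) = 0 :=
  Nat.findGreatest_eq_zero_iff.2 fun _ hn hnm hP => h ⟨_, pred_mem_stepUpIdx hn hnm hP⟩

lemma stepUpReject_eq_filter {α : ℝ} (hα : 0 ≤ α) :
    stepUpReject p α 1 = ({j | p j ≤ α / m * bhCount p (α / m)} : Finset (Fin m)) := by
  have hcount := countLE_bhCount (p := p) (div_nonneg hα m.cast_nonneg)
  unfold stepUpReject
  split_ifs with h
  · set l := (stepUpIdx p α 1).max' h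
    have hK := bhCount_eq_max'_add_one h
    have hl : p (Tuple.sort p l) ≤ α / m * bhCount p (α / m) := by
      rw [sort_le_iff_lt_countLE, hK]
      exact (mem_stepUpIdx_iff α l).1 (max'_mem _ h)
    refine eq_of_subset_of_card_le (fun j hj => ?_) ?_
    · simp only [mem_filter, mem_univ, true_and] at hj ⊢
      exact hj.trans hl
    · change countLE p _ ≤ countLE p _
      rw [hcount, hK, Nat.add_one_le_iff, ← sort_le_iff_lt_countLE]
  · refine (card_eq_zero.1 ?_).symm
    change countLE p _ = 0
    rw [hcount, bhCount_eq_zero h]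

lemma card_stepUpReject {α : ℝ} (hα : 0 ≤ α) : #(stepUpReject p α 1) = bhCount p (α / m) := by
  rw [stepUpReject_eq_filter hα]
  exact countLE_bhCount (div_nonneg hα m.cast_nonneg)

lemma countLE_update_zero {j : Fin m} {t : ℝ} (h0 : 0 ≤ t) (hj : p j ≤ t) :
    countLE (Function.update p j 0) t = countLE p t := by
  unfold countLE
  congr 1
  ext i
  by_cases hij : i = j
  · subst hij; simp [h0, hj]
  · simp [hij]

lemma bhCount_eq_of_countLE_eq (hc : 0 ≤ c)
    (h : ∀ t, c * bhCount p c ≤ t → countLE q t = countLE p t) : bhCount q c = bhCount p c := by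
  refine Nat.findGreatest_eq_iff.2 ⟨bhCount_le p c, fun _ => ?_, fun n hKn hnm hn => ?_⟩
  · rw [h _ le_rfl]
    exact bhCount_le_countLE p c
  · rw [h _ (by gcongr)] at hn
    exact absurd (le_bhCount hnm hn) (not_le.2 hKn)

/-- Leave-one-out: setting a rejected p-value to `0` does not change the number of rejections,
and a p-value rejected after being set to `0` was rejected before. -/
lemma ite_le_bhCount_eq_ite_le_bhCount_update_zero (hc : 0 ≤ c) (j : Fin m) :
    (if p j ≤ c * bhCount p c then (bhCount p c : ℝ)⁻¹ else 0) =
      if p j ≤ c * bhCount (Function.update p j 0) c then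
        (bhCount (Function.update p j 0) c : ℝ)⁻¹ else 0 := by
  have hK : ∀ q : Fin m → ℝ, 0 ≤ c * bhCount q c := fun q => by positivity
  by_cases h : p j ≤ c * bhCount p c
  · rw [bhCount_eq_of_countLE_eq hc fun t ht =>
      countLE_update_zero ((hK p).trans ht) (h.trans ht)]
  by_cases h' : p j ≤ c * bhCount (Function.update p j 0) c
  · rw [← bhCount_eq_of_countLE_eq hc fun t ht =>
      (countLE_update_zero ((hK _).trans ht) (h'.trans ht)).symm] at h'
    exact absurd h' h
  · rw [if_neg h, if_neg h']

lemma fdp_stepUpReject_eq_sum {α : ℝ} (hα : 0 ≤ α) (N : Finset (Fin m)) (p : Fin m → ℝ) :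
    (#(stepUpReject p α 1 ∩ N) : ℝ) / max 1 (#(stepUpReject p α 1) : ℝ) =
      ∑ j ∈ N, if p j ≤ α / m * bhCount (Function.update p j 0) (α / m) then
        (bhCount (Function.update p j 0) (α / m) : ℝ)⁻¹ else 0 := by
  rw [card_inter_div_max_one_card, card_stepUpReject hα]
  refine sum_congr rfl fun j _ => ?_
  rw [← ite_le_bhCount_eq_ite_le_bhCount_update_zero (div_nonneg hα m.cast_nonneg),
    stepUpReject_eq_filter hα]
  simp only [mem_filter, mem_univ, true_and]

lemma measurable_countLE (t : ℝ) : Measurable fun p : Fin m → ℝ => countLE p t := by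
  simp only [countLE, card_filter]
  exact Finset.measurable_sum _ fun j _ =>
    Measurable.ite (measurableSet_le (measurable_pi_apply j) measurable_const)
      measurable_const measurable_const

lemma measurable_bhCount (c : ℝ) : Measurable fun p : Fin m → ℝ => bhCount p c :=
  measurable_findGreatest fun _ _ => measurable_countLE _ measurableSet_Ici

end BH

/-- FDR control of the Benjamini–Hochberg procedure under independence: with m₀
independent super-uniform null p-values among m independent p-values, the FDR of the
BH step-up procedure at level α is at most α·m₀/m. -/
theorem BH_FDR_control
    {Ω : Type*} [MeasurableSpace Ω] (μ : Measure Ω) [IsProbabilityMeasure μ]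
    {m : ℕ} (p : Fin m → Ω → ℝ) (hmeas : ∀ j, Measurable (p j))
    (hindep : iIndepFun p μ)
    (N : Finset (Fin m)) (m₀ : ℕ) (hm₀ : N.card = m₀)
    (hnull : ∀ j ∈ N, ∀ t ∈ Set.Icc (0 : ℝ) 1, μ {ω | p j ω ≤ t} ≤ ENNReal.ofReal t)
    (α : ℝ) (hα : α ∈ Set.Ioo (0 : ℝ) 1) :
    (∫ ω, (((stepUpReject (fun j => p j ω) α 1) ∩ N).card : ℝ) /
        max 1 (((stepUpReject (fun j => p j ω) α 1).card : ℝ)) ∂μ)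
      ≤ α * m₀ / m := by
  obtain ⟨hα0, hα1⟩ := hα
  set c := α / m
  let K : Fin m → Ω → ℕ := fun j ω => BH.bhCount (Function.update (fun i => p i ω) j 0) c
  have hK : ∀ j, Measurable (K j) := fun j =>
    (BH.measurable_bhCount c).comp (measurable_update_left.comp (measurable_pi_lambda _ hmeas))
  have hcrit : ∀ k ∈ Icc 1 m, c * k ∈ Set.Icc (0 : ℝ) 1 := fun k hk => by
    obtain ⟨hk1, hkm⟩ := mem_Icc.1 hk
    have hm : (0 : ℝ) < m := by exact_mod_cast hk1.trans hkm
    refine ⟨by positivity, ?_⟩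
    calc c * k ≤ α / m * m := by gcongr
      _ = α := div_mul_cancel₀ α hm.ne'
      _ ≤ 1 := hα1.le
  have hindepK : ∀ j, IndepFun (p j) (K j) μ := fun j =>
    hindep.indepFun_comp_update hmeas j 0 (BH.measurable_bhCount c)
  have hterm : ∀ j ∈ N,
      ∫ ω, (if p j ω ≤ c * K j ω then (K j ω : ℝ)⁻¹ else 0) ∂μ ≤ c := fun j hj =>
    integral_ite_le_mul_inv_le (hmeas j) (hK j) (hindepK j) (by positivity)
      (fun _ => BH.bhCount_le _ _) fun k hk => hnull j hj _ (hcrit k hk)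
  calc _ = ∑ j ∈ N, ∫ ω, (if p j ω ≤ c * K j ω then (K j ω : ℝ)⁻¹ else 0) ∂μ := by
        simp_rw [BH.fdp_stepUpReject_eq_sum hα0.le]
        exact integral_finsetSum _ fun j _ => integrable_ite_le_mul_inv (hmeas j) (hK j) c
    _ ≤ ∑ j ∈ N, c := sum_le_sum hterm
    _ = α * m₀ / m := by rw [sum_const, hm₀, nsmul_eq_mul]; ring
end

section
/- Let X be a random variable taking values in a measurable space, Y ∈ {0,1} a label, and μ*(x) = P(Y = 1 | X = x). Among all measurable decision rules δ : X → {0,1} with P(δ(X) = 1) > 0 satisfying the marginal false decision rate constraint E[1{δ(X)=1, Y=0}] / E[1{δ(X)=1}] ≤ α, any thresholding rule δ*(x) = 1{μ*(x) > t*} that attains the constraint with t* = inf{t ≥ 0 : E[1{μ*(X)>t, Y=0}]/E[1{μ*(X)>t}] ≤ α} maximizes the expected number of true decisions E[1{δ(X)=1, Y=1}], provided the distribution functions t ↦ P(μ*(X) > t) and t ↦ P(μ*(X) > t, Y = 0) are continuous at t* and the constraint set is nonempty. -/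
/-!
For an event `D = {δ(X) = 1}`, since `μ* ∘ X` is the posterior of `Y = 1`,
`P(D, Y = 1) - t P(D) = ∫_D (μ*(X) - t)`, which is largest for `D = {μ* > t}`
(a Neyman–Pearson exchange). At `t = t* = 0` this is already the claim. If `t* > 0`,
thresholds just below `t*` violate the constraint, so by continuity it is active at `t*`:
`P(μ* > t*, Y = 1) ≤ (1 - α) P(μ* > t*)`, while feasibility of `δ` gives
`P(D, Y = 1) ≥ (1 - α) P(D)`. As `∫_{μ* > t*} (μ* - t*) > 0` forces `t* < 1 - α`, the
exchange inequality at `t*` combines with these two bounds to give the claim.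
-/

open MeasureTheory Set

section Integral

variable {Ω : Type*} [MeasurableSpace Ω] {μ : Measure Ω}

theorem setIntegral_pos_of_forall_pos {f : Ω → ℝ} {s : Set Ω} (hs : MeasurableSet s)
    (hf : IntegrableOn f s μ) (hpos : ∀ x ∈ s, 0 < f x) (hμs : 0 < μ s) :
    0 < ∫ x in s, f x ∂μ := by
  have hnonneg : 0 ≤ᵐ[μ.restrict s] f :=
    (ae_restrict_mem hs).mono fun x hx => (hpos x hx).le
  rw [setIntegral_pos_iff_support_of_nonneg_ae hnonneg hf]
  exact hμs.trans_le (measure_mono fun x hx => ⟨(hpos x hx).ne', hx⟩)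

theorem setIntegral_le_of_nonneg_of_nonpos_compl {f : Ω → ℝ} {s t : Set Ω}
    (hf : Integrable f μ) (hs : MeasurableSet s) (ht : MeasurableSet t)
    (hf_t : ∀ x ∈ t, 0 ≤ f x) (hf_tc : ∀ x ∈ tᶜ, f x ≤ 0) :
    ∫ x in s, f x ∂μ ≤ ∫ x in t, f x ∂μ := by
  rw [← integral_indicator hs, ← integral_indicator ht]
  refine integral_mono (hf.indicator hs) (hf.indicator ht) fun x => ?_
  by_cases hxs : x ∈ s <;> by_cases hxt : x ∈ t <;>
    simp [indicator_of_mem, indicator_of_notMem, hxs, hxt, hf_t, hf_tc]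

end Integral

section Posterior

variable {Ω 𝒳 : Type*} [MeasurableSpace Ω] [MeasurableSpace 𝒳] {μ : Measure Ω}
  {X : Ω → 𝒳} {f : 𝒳 → ℝ}

theorem ae_nonneg_of_forall_setIntegral_preimage_nonneg [IsFiniteMeasure μ]
    (hX : Measurable X) (hf : Measurable f)
    (h : ∀ A, MeasurableSet A → IntegrableOn (fun ω => f (X ω)) (X ⁻¹' A) μ →
      0 ≤ ∫ ω in X ⁻¹' A, f (X ω) ∂μ) :
    ∀ᵐ ω ∂μ, 0 ≤ f (X ω) := by
  -- Restricting to the bounded slabs `-n ≤ f < 0` makes the set integrals genuine.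
  have hnull : ∀ n : ℕ, μ (X ⁻¹' (f ⁻¹' Ico (-n : ℝ) 0)) = 0 := by
    intro n
    have hA : MeasurableSet (f ⁻¹' Ico (-n : ℝ) 0) := hf measurableSet_Ico
    have hint : IntegrableOn (fun ω => f (X ω)) (X ⁻¹' (f ⁻¹' Ico (-n : ℝ) 0)) μ := by
      refine Measure.integrableOn_of_bounded (measure_ne_top _ _)
        (hf.comp hX).aestronglyMeasurable (M := n) ?_
      filter_upwards [ae_restrict_mem (hX hA)] with ω ⟨hlo, hhi⟩
      rw [Real.norm_eq_abs, abs_of_neg hhi]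
      linarith
    by_contra hne
    have hneg := setIntegral_pos_of_forall_pos (f := fun ω => -f (X ω)) (hX hA) hint.neg
      (fun ω hω => neg_pos.2 hω.2) (pos_iff_ne_zero.2 hne)
    rw [integral_neg] at hneg
    linarith [h _ hA hint]
  rw [ae_iff]
  refine measure_mono_null (fun ω hω => ?_) (measure_iUnion_null hnull)
  obtain ⟨n, hn⟩ := exists_nat_ge (-f (X ω))
  exact mem_iUnion.2 ⟨n, neg_le.1 hn, not_le.1 hω⟩

/-- `f ∘ X` is a version of the conditional probability of `E` given `X`. -/
def IsPosterior (μ : Measure Ω) (X : Ω → 𝒳) (E : Set Ω) (f : 𝒳 → ℝ) : Prop :=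
  ∀ A, MeasurableSet A → μ.real (X ⁻¹' A ∩ E) = ∫ ω in X ⁻¹' A, f (X ω) ∂μ

namespace IsPosterior

variable [IsFiniteMeasure μ] {E : Set Ω} (h : IsPosterior μ X E f)
  (hX : Measurable X) (hf : Measurable f)
include h hX hf

theorem ae_mem_Icc : ∀ᵐ ω ∂μ, f (X ω) ∈ Icc 0 1 := by
  have h0 : ∀ᵐ ω ∂μ, 0 ≤ f (X ω) :=
    ae_nonneg_of_forall_setIntegral_preimage_nonneg hX hf fun A hA _ =>
      h A hA ▸ measureReal_nonneg
  have h1 : ∀ᵐ ω ∂μ, 0 ≤ 1 - f (X ω) := by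
    refine ae_nonneg_of_forall_setIntegral_preimage_nonneg (f := fun x => 1 - f x) hX
      (measurable_const.sub hf) fun A hA hint => ?_
    have hconst : IntegrableOn (fun _ => (1 : ℝ)) (X ⁻¹' A) μ := integrableOn_const
    have hfA : IntegrableOn (fun ω => f (X ω)) (X ⁻¹' A) μ := by
      simpa [Pi.sub_def] using hconst.sub hint
    rw [integral_sub hconst hfA, setIntegral_const, smul_eq_mul, mul_one, ← h A hA,
      sub_nonneg]
    exact measureReal_mono inter_subset_left
  filter_upwards [h0, h1] with ω h0 h1
  exact ⟨h0, by linarith⟩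

theorem integrable : Integrable (fun ω => f (X ω)) μ := by
  refine Integrable.of_bound (hf.comp hX).aestronglyMeasurable 1 ?_
  filter_upwards [h.ae_mem_Icc hX hf] with ω ⟨h0, h1⟩
  rwa [Real.norm_eq_abs, abs_of_nonneg h0]

theorem setIntegral_sub_const {A : Set 𝒳} (hA : MeasurableSet A) (t : ℝ) :
    ∫ ω in X ⁻¹' A, (f (X ω) - t) ∂μ = μ.real (X ⁻¹' A ∩ E) - t * μ.real (X ⁻¹' A) := by
  rw [integral_sub (h.integrable hX hf).integrableOn integrableOn_const, setIntegral_const,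
    smul_eq_mul, mul_comm, h A hA]

theorem measureReal_sub_mul_le {A : Set 𝒳} (hA : MeasurableSet A) (t : ℝ) :
    μ.real (X ⁻¹' A ∩ E) - t * μ.real (X ⁻¹' A) ≤
      μ.real (X ⁻¹' {x | t < f x} ∩ E) - t * μ.real (X ⁻¹' {x | t < f x}) := by
  have hT : MeasurableSet {x | t < f x} := measurableSet_lt measurable_const hf
  rw [← h.setIntegral_sub_const hX hf hA, ← h.setIntegral_sub_const hX hf hT]
  exact setIntegral_le_of_nonneg_of_nonpos_compl ((h.integrable hX hf).sub (integrable_const t))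
    (hX hA) (hX hT) (fun ω hω => sub_nonneg.2 (le_of_lt hω))
    (fun ω hω => sub_nonpos.2 (not_lt.1 hω))

theorem mul_measureReal_lt {t : ℝ} (hpos : 0 < μ (X ⁻¹' {x | t < f x})) :
    t * μ.real (X ⁻¹' {x | t < f x}) < μ.real (X ⁻¹' {x | t < f x} ∩ E) := by
  have hT : MeasurableSet {x | t < f x} := measurableSet_lt measurable_const hf
  have hint := setIntegral_pos_of_forall_pos (f := fun ω => f (X ω) - t) (hX hT)
    ((h.integrable hX hf).sub (integrable_const t)).integrableOn
    (fun ω hω => sub_pos.2 hω) hpos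
  rw [h.setIntegral_sub_const hX hf hT] at hint
  linarith

end IsPosterior

end Posterior

theorem measureReal_eq_add_of_forall_eq_zero_or_eq_one {Ω : Type*} [MeasurableSpace Ω]
    {μ : Measure Ω} [IsFiniteMeasure μ] {Y : Ω → ℕ} (hY : Measurable Y)
    (hYrange : ∀ ω, Y ω = 0 ∨ Y ω = 1) (S : Set Ω) :
    μ.real S = μ.real (S ∩ {ω | Y ω = 0}) + μ.real (S ∩ {ω | Y ω = 1}) := by
  have hS0 : S ∩ {ω | Y ω = 0} = S \ {ω | Y ω = 1} := by
    ext ω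
    rcases hYrange ω with h | h <;> simp [h]
  rw [hS0]
  exact (measureReal_sdiff_add_inter (t := {ω | Y ω = 1}) (hY (measurableSet_singleton 1))).symm

/-- Just below the infimum `a > 0` of the feasible thresholds the ratio constraint fails,
so by continuity it is active from below at `a`. -/
theorem mul_le_of_continuousAt_of_eq_sInf {F G : ℝ → ℝ} {α a : ℝ} (hα : 0 < α)
    (hG : ∀ t, 0 ≤ G t) (hF : ContinuousAt F a) (hGa : ContinuousAt G a)
    (ha : a = sInf {t | 0 ≤ t ∧ F t / G t ≤ α}) (ha0 : 0 < a) :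
    α * G a ≤ F a := by
  have hbelow : ∀ t ∈ Ioo 0 a, α * G t ≤ F t := by
    rintro t ⟨ht0, hta⟩
    have hratio : α < F t / G t := by
      have hnot := notMem_of_lt_csInf (ha ▸ hta) ⟨0, fun _ hs => hs.1⟩
      simpa [ht0.le] using hnot
    have hGt : 0 < G t := (hG t).lt_of_ne' fun h0 => by
      rw [h0, div_zero] at hratio
      linarith
    exact ((lt_div_iff₀ hGt).1 hratio).le
  refine ContinuousWithinAt.closure_le ?_ (hGa.const_mul α).continuousWithinAt
    hF.continuousWithinAt hbelow
  rw [closure_Ioo ha0.ne]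
  exact right_mem_Icc.2 ha0.le

/-- `hpos` and `hp₁` force `t < c`; then `hexch` scaled by `c` gives `(c - t) q₁ ≤ (c - t) p₁`. -/
theorem le_of_exchange {c t p p₁ q q₁ : ℝ} (hp : 0 ≤ p) (ht : 0 ≤ t) (hp₁ : p₁ ≤ c * p)
    (hq₁ : c * q ≤ q₁) (hpos : t * p < p₁) (hexch : q₁ - t * q ≤ p₁ - t * p) :
    q₁ ≤ p₁ := by
  have htc : t < c := by
    by_contra! hct
    nlinarith [mul_le_mul_of_nonneg_right hct hp]
  have key : (c - t) * q₁ ≤ (c - t) * p₁ := calc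
    (c - t) * q₁ ≤ c * (q₁ - t * q) := by nlinarith [mul_le_mul_of_nonneg_left hq₁ ht]
    _ ≤ c * (p₁ - t * p) := mul_le_mul_of_nonneg_left hexch (ht.trans htc.le)
    _ ≤ (c - t) * p₁ := by nlinarith [mul_le_mul_of_nonneg_left hp₁ ht]
  exact le_of_mul_le_mul_left key (sub_pos.2 htc)

theorem posterior_threshold_optimal_general
    {Ω : Type*} [MeasurableSpace Ω] (μ : Measure Ω) [IsProbabilityMeasure μ]
    {𝒳 : Type*} [MeasurableSpace 𝒳]
    (X : Ω → 𝒳) (hX : Measurable X)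
    (Y : Ω → ℕ) (hY : Measurable Y) (hYrange : ∀ ω, Y ω = 0 ∨ Y ω = 1)
    (μstar : 𝒳 → ℝ) (hμstar : Measurable μstar)
    -- μstar ∘ X is a version of the conditional probability P(Y = 1 | X):
    (hcond : ∀ A : Set 𝒳, MeasurableSet A →
      (μ (X ⁻¹' A ∩ {ω | Y ω = 1})).toReal = ∫ ω in X ⁻¹' A, μstar (X ω) ∂μ)
    (α : ℝ) (hα : α ∈ Set.Ioo (0 : ℝ) 1)
    (C : Set ℝ)
    (hC : C = {t : ℝ | 0 ≤ t ∧
      (μ {ω | μstar (X ω) > t ∧ Y ω = 0}).toReal /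
        (μ {ω | μstar (X ω) > t}).toReal ≤ α})
    (tstar : ℝ) (htstar : tstar = sInf C)
    -- continuity of the two distribution functions at t*:
    (hcont1 : ContinuousAt (fun t => (μ {ω | μstar (X ω) > t}).toReal) tstar)
    (hcont0 : ContinuousAt
      (fun t => (μ {ω | μstar (X ω) > t ∧ Y ω = 0}).toReal) tstar)
    -- the thresholding rule attains the constraint:
    (hpos : 0 < μ {ω | μstar (X ω) > tstar})
    -- a competing feasible rule:
    (δ : 𝒳 → Bool) (hδ : Measurable δ)
    (hδpos : 0 < μ {ω | δ (X ω) = true})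
    (hδfeas : (μ {ω | δ (X ω) = true ∧ Y ω = 0}).toReal /
        (μ {ω | δ (X ω) = true}).toReal ≤ α) :
    (μ {ω | δ (X ω) = true ∧ Y ω = 1}).toReal ≤
      (μ {ω | μstar (X ω) > tstar ∧ Y ω = 1}).toReal := by
  have hpost : IsPosterior μ X {ω | Y ω = 1} μstar := hcond
  set p := (μ {ω | μstar (X ω) > tstar}).toReal
  set p₀ := (μ {ω | μstar (X ω) > tstar ∧ Y ω = 0}).toReal
  set p₁ := (μ {ω | μstar (X ω) > tstar ∧ Y ω = 1}).toReal
  set q := (μ {ω | δ (X ω) = true}).toReal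
  set q₀ := (μ {ω | δ (X ω) = true ∧ Y ω = 0}).toReal
  set q₁ := (μ {ω | δ (X ω) = true ∧ Y ω = 1}).toReal
  have hexch : q₁ - tstar * q ≤ p₁ - tstar * p :=
    hpost.measureReal_sub_mul_le hX hμstar (hδ (measurableSet_singleton true)) tstar
  have ht0 : 0 ≤ tstar := htstar ▸ Real.sInf_nonneg fun t ht => (hC ▸ ht).1
  rcases ht0.eq_or_lt with h0 | ht
  · rw [← h0] at hexch
    linarith
  have hp : p = p₀ + p₁ := measureReal_eq_add_of_forall_eq_zero_or_eq_one hY hYrange _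
  have hq : q = q₀ + q₁ := measureReal_eq_add_of_forall_eq_zero_or_eq_one hY hYrange _
  have hp₀ : α * p ≤ p₀ := (mul_le_of_continuousAt_of_eq_sInf hα.1
    (fun _ => ENNReal.toReal_nonneg) hcont0 hcont1 (htstar.trans (congrArg sInf hC)) ht :)
  have hq₀ : q₀ ≤ α * q :=
    (div_le_iff₀ (ENNReal.toReal_pos hδpos.ne' (measure_ne_top _ _))).1 hδfeas
  have hp₁ : tstar * p < p₁ := hpost.mul_measureReal_lt hX hμstar hpos
  exact le_of_exchange (c := 1 - α) ENNReal.toReal_nonneg ht0 (by linarith) (by linarith)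
    hp₁ hexch

/-- Oracle optimality of posterior thresholding under an mFDR constraint (binary case):
among all measurable decision rules with positive decision probability satisfying the
marginal false decision rate constraint, the rule thresholding the posterior probability
μ* at t* maximizes the expected number of true decisions. -/
theorem posterior_threshold_optimal
    {Ω : Type*} [MeasurableSpace Ω] (μ : Measure Ω) [IsProbabilityMeasure μ]
    {𝒳 : Type*} [MeasurableSpace 𝒳]
    (X : Ω → 𝒳) (hX : Measurable X)
    (Y : Ω → ℕ) (hY : Measurable Y) (hYrange : ∀ ω, Y ω = 0 ∨ Y ω = 1)
    (μstar : 𝒳 → ℝ) (hμstar : Measurable μstar)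
    -- μstar ∘ X is a version of the conditional probability P(Y = 1 | X):
    (hcond : ∀ A : Set 𝒳, MeasurableSet A →
      (μ (X ⁻¹' A ∩ {ω | Y ω = 1})).toReal = ∫ ω in X ⁻¹' A, μstar (X ω) ∂μ)
    (α : ℝ) (hα : α ∈ Set.Ioo (0 : ℝ) 1)
    (C : Set ℝ)
    (hC : C = {t : ℝ | 0 ≤ t ∧
      (μ {ω | μstar (X ω) > t ∧ Y ω = 0}).toReal /
        (μ {ω | μstar (X ω) > t}).toReal ≤ α})
    (hCne : C.Nonempty)
    (tstar : ℝ) (htstar : tstar = sInf C)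
    -- continuity of the two distribution functions at t*:
    (hcont1 : ContinuousAt (fun t => (μ {ω | μstar (X ω) > t}).toReal) tstar)
    (hcont0 : ContinuousAt
      (fun t => (μ {ω | μstar (X ω) > t ∧ Y ω = 0}).toReal) tstar)
    -- the thresholding rule attains the constraint:
    (hpos : 0 < μ {ω | μstar (X ω) > tstar})
    (hfeas : (μ {ω | μstar (X ω) > tstar ∧ Y ω = 0}).toReal /
        (μ {ω | μstar (X ω) > tstar}).toReal ≤ α)
    -- a competing feasible rule:
    (δ : 𝒳 → Bool) (hδ : Measurable δ)
    (hδpos : 0 < μ {ω | δ (X ω) = true})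
    (hδfeas : (μ {ω | δ (X ω) = true ∧ Y ω = 0}).toReal /
        (μ {ω | δ (X ω) = true}).toReal ≤ α) :
    (μ {ω | δ (X ω) = true ∧ Y ω = 1}).toReal ≤
      (μ {ω | μstar (X ω) > tstar ∧ Y ω = 1}).toReal :=
  posterior_threshold_optimal_general μ X hX Y hY hYrange μstar hμstar hcond α hα C hC tstar htstar
    hcont1 hcont0 hpos δ hδ hδpos hδfeas
end
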